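/- arXiv:2605.30397 — 4 statements merged into one kernel-verified Lean document; each statement's English description precedes it below -/
import Mathlib

section
/- Let U be the subgroup of GL_n(𝔽_q) of upper triangular matrices with all diagonal entries 1, acting on S = 𝔽_q[x_1, …, x_n] by linear substitutions. For each i ∈ {1, …, n} let V_i = f_{span(x_1, …, x_{i−1})}(x_i) = ∏_{w ∈ span_{𝔽_q}(x_1,…,x_{i−1})}(x_i + w) (in particular V_1 = x_1). Then the invariant ring is the polynomial algebra S^U = 𝔽_q[V_1, …, V_n]. -/
open MvPolynomial
set_option linter.unusedSectionVars false
set_option maxHeartbeats 1000000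
set_option linter.unusedTactic false

/-- The action of a matrix `σ` on polynomials by linear substitution of the
variables: `x_j ↦ ∑ i, σ i j • x_i`. -/
noncomputable def glAct {K : Type*} [CommSemiring K] {n : ℕ}
    (σ : Matrix (Fin n) (Fin n) K) :
    MvPolynomial (Fin n) K →ₐ[K] MvPolynomial (Fin n) K :=
  aeval fun j => ∑ i, σ i j • X i


namespace Mui

variable {F : Type*} [Field F] [Fintype F] {n : ℕ}

/-- Unipotent upper triangular. -/
def Uni (σ : Matrix (Fin n) (Fin n) F) : Prop :=
  (∀ i, σ i i = 1) ∧ ∀ i j, j < i → σ i j = 0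

lemma glAct_X {K : Type*} [CommSemiring K] {n : ℕ} (σ : Matrix (Fin n) (Fin n) K) (j : Fin n) :
    glAct σ (X j) = ∑ i, σ i j • X i := by
  simp [glAct]

lemma glAct_glAct {K : Type*} [CommSemiring K] {n : ℕ} (σ τ : Matrix (Fin n) (Fin n) K)
    (f : MvPolynomial (Fin n) K) :
    glAct σ (glAct τ f) = glAct (σ * τ) f := by
  have : (glAct σ).comp (glAct τ) = glAct (σ * τ) := by
    apply MvPolynomial.algHom_ext
    intro j
    simp only [AlgHom.comp_apply, glAct_X, map_sum]
    simp only [map_smul, glAct_X, Finset.smul_sum, smul_smul]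
    rw [Finset.sum_comm]
    refine Finset.sum_congr rfl fun k _ => ?_
    rw [Matrix.mul_apply, Finset.sum_smul]
    refine Finset.sum_congr rfl fun l _ => ?_
    rw [mul_comm]
  exact DFunLike.congr_fun this f

lemma glAct_one {K : Type*} [CommSemiring K] {n : ℕ} (f : MvPolynomial (Fin n) K) :
    glAct (1 : Matrix (Fin n) (Fin n) K) f = f := by
  have : glAct (1 : Matrix (Fin n) (Fin n) K) = AlgHom.id K _ := by
    apply MvPolynomial.algHom_ext
    intro j
    simp [glAct_X, Matrix.one_apply]
  rw [this]; rfl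

open Finset

variable {F : Type*} [Field F] [Fintype F] {n : ℕ}

lemma Uni.det_ne_zero {M : Matrix (Fin n) (Fin n) F} (h : Uni M) : M.det ≠ 0 := by
  have : M.BlockTriangular id := fun i j hij => h.2 i j hij
  rw [Matrix.det_of_upperTriangular this]
  simp [h.1]

lemma Uni.isUnit {M : Matrix (Fin n) (Fin n) F} (h : Uni M) : IsUnit M := by
  rw [Matrix.isUnit_iff_isUnit_det]
  exact Ne.isUnit h.det_ne_zero

lemma glAct_injective {M : Matrix (Fin n) (Fin n) F} (h : IsUnit M) :
    Function.Injective (glAct M : MvPolynomial (Fin n) F →ₐ[F] _) := by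
  intro a b hab
  have h1 : M⁻¹ * M = 1 := Matrix.nonsing_inv_mul M ((Matrix.isUnit_iff_isUnit_det M).1 h)
  have := congrArg (glAct (M⁻¹ : Matrix (Fin n) (Fin n) F)) hab
  rwa [glAct_glAct, glAct_glAct, h1, glAct_one, glAct_one] at this

/-- Translation-invariance product trick. -/
lemma prod_invOn {β R : Type*} [CommMonoid β] [DecidableEq R] (G : Finset R) (φ : R → R)
    (hmap : ∀ w ∈ G, φ w ∈ G) (hinj : Set.InjOn φ G) (f : R → β) :
    ∏ w ∈ G, f (φ w) = ∏ w ∈ G, f w := by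
  have himg : G.image φ = G :=
    Finset.eq_of_subset_of_card_le (Finset.image_subset_iff.2 hmap)
      (le_of_eq (Finset.card_image_of_injOn hinj).symm)
  rw [← Finset.prod_image (fun a ha b hb => hinj ha hb), himg]

end Mui


namespace Mui
variable (F : Type*) [Field F] [Fintype F] (n : ℕ)

noncomputable def WF (i : Fin n) : Finset (MvPolynomial (Fin n) F) :=
  letI := Classical.decEq (MvPolynomial (Fin n) F)
  Finset.image
    (fun c : Fin n → F => ∑ j ∈ Finset.univ.filter (fun j => j < i), c j • X j) Finset.univ

noncomputable def GF : Finset (MvPolynomial (Fin n) F) :=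
  letI := Classical.decEq (MvPolynomial (Fin n) F)
  Finset.image (fun c : Fin n → F => ∑ j, c j • X j) Finset.univ

lemma coe_GF : ↑(GF F n) = (Submodule.span F (Set.range (X : Fin n → MvPolynomial (Fin n) F)) :
    Set (MvPolynomial (Fin n) F)) := by
  classical
  ext w
  simp only [GF, Finset.coe_image, Set.mem_image, SetLike.mem_coe,
    Submodule.mem_span_range_iff_exists_fun, Finset.mem_coe, Finset.mem_image, Finset.mem_univ, true_and,
    Set.mem_range, Finset.coe_univ, Set.image_univ]

lemma coe_WF (i : Fin n) : ↑(WF F n i) =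
    (Submodule.span F ((X : Fin n → MvPolynomial (Fin n) F) '' {j : Fin n | j < i}) :
      Set (MvPolynomial (Fin n) F)) := by
  classical
  set L : (Fin n → F) →ₗ[F] MvPolynomial (Fin n) F :=
    ∑ j ∈ Finset.univ.filter (fun j => j < i), LinearMap.smulRight (LinearMap.proj j) (X j) with hL
  have hLapp : ∀ c, L c = ∑ j ∈ Finset.univ.filter (fun j => j < i), c j • X j := by
    intro c
    rw [hL, LinearMap.sum_apply]
    rfl
  have hrange : LinearMap.range L =
      Submodule.span F ((X : Fin n → MvPolynomial (Fin n) F) '' {j : Fin n | j < i}) := by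
    apply le_antisymm
    · rintro w ⟨c, rfl⟩
      rw [hLapp]
      refine Submodule.sum_mem _ fun j hj => Submodule.smul_mem _ _ (Submodule.subset_span ?_)
      exact ⟨j, by simpa using hj, rfl⟩
    · rw [Submodule.span_le]
      rintro w ⟨j, hj, rfl⟩
      refine ⟨Pi.single j 1, ?_⟩
      rw [hLapp]
      rw [Finset.sum_eq_single j]
      · simp
      · intro k hk hkj
        simp [Pi.single_eq_of_ne hkj]
      · intro hj'
        exact absurd (by simpa using hj) hj'
  rw [← hrange]
  ext w
  simp only [WF, Finset.coe_image, Finset.coe_univ, Set.image_univ, Set.mem_range,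
    SetLike.mem_coe, LinearMap.mem_range]
  constructor
  · rintro ⟨c, rfl⟩; exact ⟨c, (hLapp c)⟩
  · rintro ⟨c, rfl⟩; exact ⟨c, (hLapp c).symm⟩

noncomputable def Vp (i : Fin n) : MvPolynomial (Fin n) F :=
  ∏ w ∈ WF F n i, (X i + w)

end Mui

namespace Mui
variable {F : Type*} [Field F] [Fintype F] {n : ℕ}

lemma glAct_mem_WF {M : Matrix (Fin n) (Fin n) F} (hM : ∀ i j, j < i → M i j = 0)
    {i : Fin n} {w : MvPolynomial (Fin n) F} (hw : w ∈ WF F n i) :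
    glAct M w ∈ WF F n i := by
  rw [← Finset.mem_coe, coe_WF, SetLike.mem_coe] at hw ⊢
  induction hw using Submodule.span_induction with
  | mem x hx =>
    obtain ⟨j, hj, rfl⟩ := hx
    rw [glAct_X]
    refine Submodule.sum_mem _ fun k _ => ?_
    by_cases hk : k ≤ j
    · exact Submodule.smul_mem _ _ (Submodule.subset_span ⟨k, lt_of_le_of_lt hk hj, rfl⟩)
    · rw [hM k j (lt_of_not_ge hk), zero_smul]
      exact Submodule.zero_mem _
  | zero => rw [map_zero]; exact Submodule.zero_mem _
  | add x y _ _ hx hy => rw [map_add]; exact Submodule.add_mem _ hx hy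
  | smul a x _ hx => rw [map_smul]; exact Submodule.smul_mem _ _ hx

lemma glAct_mem_GF (M : Matrix (Fin n) (Fin n) F)
    {w : MvPolynomial (Fin n) F} (hw : w ∈ GF F n) :
    glAct M w ∈ GF F n := by
  rw [← Finset.mem_coe, coe_GF, SetLike.mem_coe] at hw ⊢
  induction hw using Submodule.span_induction with
  | mem x hx =>
    obtain ⟨j, rfl⟩ := hx
    rw [glAct_X]
    exact Submodule.sum_mem _ fun k _ =>
      Submodule.smul_mem _ _ (Submodule.subset_span ⟨k, rfl⟩)
  | zero => rw [map_zero]; exact Submodule.zero_mem _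
  | add x y _ _ hx hy => rw [map_add]; exact Submodule.add_mem _ hx hy
  | smul a x _ hx => rw [map_smul]; exact Submodule.smul_mem _ _ hx

lemma add_mem_WF {i : Fin n} {u w : MvPolynomial (Fin n) F}
    (hu : u ∈ WF F n i) (hw : w ∈ WF F n i) : u + w ∈ WF F n i := by
  rw [← Finset.mem_coe, coe_WF, SetLike.mem_coe] at hu hw ⊢
  exact Submodule.add_mem _ hu hw

lemma add_mem_GF {u w : MvPolynomial (Fin n) F}
    (hu : u ∈ GF F n) (hw : w ∈ GF F n) : u + w ∈ GF F n := by
  rw [← Finset.mem_coe, coe_GF, SetLike.mem_coe] at hu hw ⊢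
  exact Submodule.add_mem _ hu hw

lemma zero_mem_GF : (0 : MvPolynomial (Fin n) F) ∈ GF F n := by
  rw [← Finset.mem_coe, coe_GF, SetLike.mem_coe]
  exact Submodule.zero_mem _

end Mui
namespace Mui
variable {F : Type*} [Field F] [Fintype F] {n : ℕ}

lemma mem_WF {i : Fin n} {w : MvPolynomial (Fin n) F} : w ∈ WF F n i ↔
    w ∈ Submodule.span F ((X : Fin n → MvPolynomial (Fin n) F) '' {j : Fin n | j < i}) := by
  rw [← Finset.mem_coe, coe_WF, SetLike.mem_coe]

lemma mem_GF {w : MvPolynomial (Fin n) F} : w ∈ GF F n ↔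
    ∃ c : Fin n → F, ∑ j, c j • X j = w := by
  rw [← Finset.mem_coe, coe_GF, SetLike.mem_coe, Submodule.mem_span_range_iff_exists_fun]

lemma glAct_X_eq {M : Matrix (Fin n) (Fin n) F} (hM : Uni M) (i : Fin n) :
    ∃ u ∈ WF F n i, glAct M (X i) = X i + u := by
  classical
  refine ⟨∑ j ∈ Finset.univ.filter (fun j => j < i), M j i • X j,
    mem_WF.2 (Submodule.sum_mem _ fun j hj => Submodule.smul_mem _ _ (Submodule.subset_span
      ⟨j, (Finset.mem_filter.1 hj).2, rfl⟩)), ?_⟩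
  rw [glAct_X, ← Finset.add_sum_erase _ _ (Finset.mem_univ i), hM.1 i, one_smul]
  congr 1
  refine (Finset.sum_subset ?_ ?_).symm
  · intro j hj
    rw [Finset.mem_filter] at hj
    exact Finset.mem_erase.2 ⟨ne_of_lt hj.2, Finset.mem_univ _⟩
  · intro j hj hj'
    rw [Finset.mem_erase] at hj
    rw [Finset.mem_filter] at hj'
    have : i < j := lt_of_le_of_ne (not_lt.1 fun h => hj' ⟨Finset.mem_univ _, h⟩) (Ne.symm hj.1)
    rw [hM.2 j i this, zero_smul]

lemma glAct_Vp {M : Matrix (Fin n) (Fin n) F} (hM : Uni M) (i : Fin n) :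
    glAct M (Vp F n i) = Vp F n i := by
  classical
  obtain ⟨u, hu, hX⟩ := glAct_X_eq hM i
  rw [Vp, map_prod]
  simp only [map_add, hX]
  have h1 : ∀ w ∈ WF F n i, X i + u + glAct M w = X i + (u + glAct M w) := fun _ _ => add_assoc _ _ _
  rw [Finset.prod_congr rfl h1]
  exact prod_invOn (WF F n i) (fun w => u + glAct M w)
    (fun w hw => add_mem_WF hu (glAct_mem_WF hM.2 hw))
    (fun a _ b _ hab => glAct_injective hM.isUnit (by exact add_left_cancel hab))
    (fun w => X i + w)

lemma easy_dir {f : MvPolynomial (Fin n) F}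
    (hf : f ∈ Algebra.adjoin F (Set.range (Vp F n)))
    {M : Matrix (Fin n) (Fin n) F} (hM : Uni M) : glAct M f = f := by
  induction hf using Algebra.adjoin_induction with
  | mem x hx => obtain ⟨i, rfl⟩ := hx; exact glAct_Vp hM i
  | algebraMap r => exact (glAct M).commutes r
  | add x y _ _ hx hy => rw [map_add, hx, hy]
  | mul x y _ _ hx hy => rw [map_mul, hx, hy]

end Mui

namespace Mui
variable {F : Type*} [Field F] [Fintype F] {n : ℕ}

/-- `ι` : embed into one more variable. -/
noncomputable def emb : MvPolynomial (Fin n) F →ₐ[F] MvPolynomial (Fin (n + 1)) F :=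
  rename Fin.castSucc

/-- cut off the last variable. -/
noncomputable def Phi (F : Type*) [Field F] (n : ℕ) :
    MvPolynomial (Fin (n + 1)) F ≃ₐ[F] Polynomial (MvPolynomial (Fin n) F) :=
  (renameEquiv F (finSuccEquiv' (Fin.last n))).trans (optionEquivLeft F (Fin n))

lemma Phi_X_last : Phi F n (X (Fin.last n)) = Polynomial.X := by
  simp only [Phi, AlgEquiv.trans_apply, renameEquiv_apply, rename_X, finSuccEquiv'_at]
  exact optionEquivLeft_X_none F (Fin n)

lemma Phi_X_castSucc (j : Fin n) :
    Phi F n (X (Fin.castSucc j)) = Polynomial.C (X j) := by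
  simp only [Phi, AlgEquiv.trans_apply, renameEquiv_apply, rename_X,
    finSuccEquiv'_below (Fin.castSucc_lt_last j)]
  exact optionEquivLeft_X_some F (Fin n) j

lemma Phi_emb (a : MvPolynomial (Fin n) F) :
    Phi F n (emb a) = Polynomial.C a := by
  have : ((Phi F n).toAlgHom.comp emb : MvPolynomial (Fin n) F →ₐ[F] _) =
      ((Polynomial.CAlgHom (R := MvPolynomial (Fin n) F)).restrictScalars F).comp (AlgHom.id F _) := by
    apply MvPolynomial.algHom_ext
    intro j
    simp only [AlgHom.comp_apply, AlgHom.coe_restrictScalars, AlgHom.id_apply, emb, rename_X,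
      AlgEquiv.toAlgHom_eq_coe, AlgHom.coe_coe, AlgEquiv.coe_toAlgHom]
    rw [Phi_X_castSucc]
    rfl
  exact DFunLike.congr_fun this a

lemma Phi_symm_X : (Phi F n).symm Polynomial.X = X (Fin.last n) :=
  (AlgEquiv.symm_apply_eq _).2 Phi_X_last.symm

lemma Phi_symm_C (a : MvPolynomial (Fin n) F) :
    (Phi F n).symm (Polynomial.C a) = emb a :=
  (AlgEquiv.symm_apply_eq _).2 (Phi_emb a).symm

end Mui

namespace Mui
variable {F : Type*} [Field F] [Fintype F] {n : ℕ}

/-- Translation matrix: identity plus last column `c`. -/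
def tmat (c : Fin n → F) : Matrix (Fin (n + 1)) (Fin (n + 1)) F :=
  1 + Matrix.of fun i j => if j = Fin.last n then Fin.snoc c 0 i else 0

/-- Block matrix `M ⊕ 1`. -/
def bmat (M : Matrix (Fin n) (Fin n) F) : Matrix (Fin (n + 1)) (Fin (n + 1)) F :=
  (Matrix.fromBlocks M 0 0 1).submatrix finSumFinEquiv.symm finSumFinEquiv.symm

lemma finSumFinEquiv_symm_castSucc (j : Fin n) :
    (finSumFinEquiv (m := n) (n := 1)).symm (Fin.castSucc j) = Sum.inl j :=
  finSumFinEquiv_symm_apply_castAdd j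

lemma bmat_cast_cast (M : Matrix (Fin n) (Fin n) F) (i j : Fin n) :
    bmat M (Fin.castSucc i) (Fin.castSucc j) = M i j := by
  simp [bmat, finSumFinEquiv_symm_castSucc]

lemma bmat_last_cast (M : Matrix (Fin n) (Fin n) F) (j : Fin n) :
    bmat M (Fin.last n) (Fin.castSucc j) = 0 := by
  simp [bmat, finSumFinEquiv_symm_castSucc, finSumFinEquiv_symm_last]

lemma bmat_cast_last (M : Matrix (Fin n) (Fin n) F) (i : Fin n) :
    bmat M (Fin.castSucc i) (Fin.last n) = 0 := by
  simp [bmat, finSumFinEquiv_symm_castSucc, finSumFinEquiv_symm_last]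

lemma bmat_last_last (M : Matrix (Fin n) (Fin n) F) :
    bmat M (Fin.last n) (Fin.last n) = 1 := by
  simp [bmat, finSumFinEquiv_symm_last]

lemma uni_tmat (c : Fin n → F) : Uni (tmat c) := by
  constructor
  · intro i
    simp only [tmat, Matrix.add_apply, Matrix.one_apply_eq, Matrix.of_apply]
    rcases eq_or_ne i (Fin.last n) with h | h
    · subst h; simp
    · simp [h]
  · intro i j hij
    have hne : i ≠ j := (ne_of_lt hij).symm
    have hj : j ≠ Fin.last n := ne_of_lt (lt_of_lt_of_le hij (Fin.le_last i))
    simp [tmat, Matrix.one_apply, hne, hj]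

lemma uni_bmat {M : Matrix (Fin n) (Fin n) F} (hM : Uni M) : Uni (bmat M) := by
  constructor
  · intro i
    induction i using Fin.lastCases with
    | last => exact bmat_last_last M
    | cast i => rw [bmat_cast_cast]; exact hM.1 i
  · intro i j hij
    induction i using Fin.lastCases with
    | last =>
      obtain ⟨j', rfl⟩ := Fin.exists_castSucc_eq.2 (ne_of_lt hij)
      exact bmat_last_cast M j'
    | cast i =>
      have hj : j ≠ Fin.last n :=
        ne_of_lt (lt_of_lt_of_le hij (Fin.le_last _))
      obtain ⟨j', rfl⟩ := Fin.exists_castSucc_eq.2 hj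
      rw [bmat_cast_cast]
      exact hM.2 i j' (Fin.castSucc_lt_castSucc_iff.1 hij)

/-- sums of variables. -/
noncomputable def sc (c : Fin n → F) : MvPolynomial (Fin n) F := ∑ j, c j • X j

lemma glAct_tmat_X_cast (c : Fin n → F) (j : Fin n) :
    glAct (tmat c) (X (Fin.castSucc j)) = X (Fin.castSucc j) := by
  rw [glAct_X]
  have h1 : ∀ i : Fin (n + 1), tmat c i (Fin.castSucc j) = (1 : Matrix _ _ F) i (Fin.castSucc j) := by
    intro i
    simp [tmat, ne_of_lt (Fin.castSucc_lt_last j)]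
  calc ∑ i, tmat c i (Fin.castSucc j) • X i
      = ∑ i, (1 : Matrix (Fin (n+1)) (Fin (n+1)) F) i (Fin.castSucc j) • X i := by
        exact Finset.sum_congr rfl fun i _ => by rw [h1]
    _ = glAct (1 : Matrix (Fin (n+1)) (Fin (n+1)) F) (X (Fin.castSucc j)) := (glAct_X _ _).symm
    _ = X (Fin.castSucc j) := glAct_one _

lemma glAct_tmat_X_last (c : Fin n → F) :
    glAct (tmat c) (X (Fin.last n)) = X (Fin.last n) + emb (sc c) := by
  rw [glAct_X]
  have h1 : ∀ i : Fin (n + 1),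
      tmat c i (Fin.last n) • (X i : MvPolynomial (Fin (n+1)) F) =
        (1 : Matrix (Fin (n+1)) (Fin (n+1)) F) i (Fin.last n) • (X i : MvPolynomial (Fin (n+1)) F)
          + (Fin.snoc (α := fun _ => F) c 0 i) • (X i : MvPolynomial (Fin (n+1)) F) := by
    intro i
    rw [tmat]
    simp [Matrix.add_apply, Matrix.of_apply, add_smul]
  rw [Finset.sum_congr rfl fun i _ => h1 i, Finset.sum_add_distrib]
  congr 1
  · calc ∑ i, (1 : Matrix (Fin (n+1)) (Fin (n+1)) F) i (Fin.last n) • X i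
        = glAct (1 : Matrix (Fin (n+1)) (Fin (n+1)) F) (X (Fin.last n)) := (glAct_X _ _).symm
      _ = X (Fin.last n) := glAct_one _
  · rw [Fin.sum_univ_castSucc]
    simp only [Fin.snoc_castSucc, Fin.snoc_last, zero_smul, add_zero]
    rw [sc, map_sum]
    exact Finset.sum_congr rfl fun i _ => by rw [map_smul, emb, rename_X]

lemma glAct_bmat_X_last (M : Matrix (Fin n) (Fin n) F) :
    glAct (bmat M) (X (Fin.last n)) = X (Fin.last n) := by
  rw [glAct_X, Fin.sum_univ_castSucc]
  simp [bmat_cast_last, bmat_last_last]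

lemma glAct_bmat_X_cast (M : Matrix (Fin n) (Fin n) F) (j : Fin n) :
    glAct (bmat M) (X (Fin.castSucc j)) = emb (glAct M (X j)) := by
  rw [glAct_X, Fin.sum_univ_castSucc, bmat_last_cast, zero_smul, add_zero, glAct_X, map_sum]
  exact Finset.sum_congr rfl fun i _ => by rw [bmat_cast_cast, map_smul, emb, rename_X]

end Mui

namespace Mui
variable {F : Type*} [Field F] [Fintype F] {n : ℕ}

lemma aeval_eq_comp (s : MvPolynomial (Fin n) F) (p : Polynomial (MvPolynomial (Fin n) F)) :
    Polynomial.aeval (Polynomial.X + Polynomial.C s) p = p.comp (Polynomial.X + Polynomial.C s) := by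
  rw [Polynomial.aeval_def, Polynomial.comp, Polynomial.algebraMap_eq]

lemma Phi_glAct_tmat (c : Fin n → F) (f : MvPolynomial (Fin (n + 1)) F) :
    Phi F n (glAct (tmat c) f) =
      (Phi F n f).comp (Polynomial.X + Polynomial.C (sc c)) := by
  have key : ((Phi F n).toAlgHom.comp (glAct (tmat c))) =
      ((Polynomial.aeval (Polynomial.X + Polynomial.C (sc c))).restrictScalars F).comp
        (Phi F n).toAlgHom := by
    apply MvPolynomial.algHom_ext
    intro k
    induction k using Fin.lastCases with
    | last =>
      simp only [AlgHom.comp_apply, AlgEquiv.toAlgHom_eq_coe, AlgHom.coe_coe,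
        AlgHom.coe_restrictScalars, AlgHom.restrictScalars_apply, AlgEquiv.coe_toAlgHom]
      rw [glAct_tmat_X_last, map_add, Phi_X_last, Phi_emb, Polynomial.aeval_X]
    | cast j =>
      simp only [AlgHom.comp_apply, AlgEquiv.toAlgHom_eq_coe, AlgHom.coe_coe,
        AlgHom.coe_restrictScalars, AlgHom.restrictScalars_apply, AlgEquiv.coe_toAlgHom]
      rw [glAct_tmat_X_cast, Phi_X_castSucc, Polynomial.aeval_C]
      rfl
  have := DFunLike.congr_fun key f
  simp only [AlgHom.comp_apply, AlgEquiv.toAlgHom_eq_coe, AlgHom.coe_coe,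
    AlgHom.coe_restrictScalars, AlgHom.restrictScalars_apply, AlgEquiv.coe_toAlgHom] at this
  rw [this, aeval_eq_comp]

lemma Phi_glAct_bmat (M : Matrix (Fin n) (Fin n) F) (f : MvPolynomial (Fin (n + 1)) F) :
    Phi F n (glAct (bmat M) f) =
      Polynomial.map (glAct M : MvPolynomial (Fin n) F →ₐ[F] _).toRingHom (Phi F n f) := by
  have key : ((Phi F n).toAlgHom.comp (glAct (bmat M))) =
      (Polynomial.mapAlgHom (glAct M)).comp (Phi F n).toAlgHom := by
    apply MvPolynomial.algHom_ext
    intro k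
    induction k using Fin.lastCases with
    | last =>
      simp only [AlgHom.comp_apply, AlgEquiv.toAlgHom_eq_coe, AlgHom.coe_coe, AlgEquiv.coe_toAlgHom]
      rw [glAct_bmat_X_last, Phi_X_last]
      simp [Polynomial.mapAlgHom]
    | cast j =>
      simp only [AlgHom.comp_apply, AlgEquiv.toAlgHom_eq_coe, AlgHom.coe_coe, AlgEquiv.coe_toAlgHom]
      rw [glAct_bmat_X_cast, Phi_emb, Phi_X_castSucc]
      simp [Polynomial.mapAlgHom]
  have := DFunLike.congr_fun key f
  simpa [Polynomial.mapAlgHom] using this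

/-- the big product polynomial -/
noncomputable def vP (F : Type*) [Field F] [Fintype F] (n : ℕ) :
    Polynomial (MvPolynomial (Fin n) F) :=
  ∏ w ∈ GF F n, (Polynomial.X + Polynomial.C w)

lemma monic_vP : (vP F n).Monic :=
  Polynomial.monic_prod_of_monic _ _ fun w _ => Polynomial.monic_X_add_C w

lemma natDegree_vP : (vP F n).natDegree = (GF F n).card := by
  rw [vP, Polynomial.natDegree_prod _ _ fun w _ => (Polynomial.monic_X_add_C w).ne_zero]
  simp [Polynomial.natDegree_X_add_C]

lemma card_GF_pos : 0 < (GF F n).card := by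
  refine Finset.card_pos.2 ⟨0, ?_⟩
  exact mem_GF.2 ⟨0, by simp⟩

lemma vP_comp {s : MvPolynomial (Fin n) F} (hs : s ∈ GF F n) :
    (vP F n).comp (Polynomial.X + Polynomial.C s) = vP F n := by
  classical
  rw [vP, Polynomial.prod_comp]
  have h1 : ∀ w ∈ GF F n,
      (Polynomial.X + Polynomial.C w).comp (Polynomial.X + Polynomial.C s)
        = Polynomial.X + Polynomial.C (s + w) := by
    intro w _
    rw [Polynomial.add_comp, Polynomial.X_comp, Polynomial.C_comp, Polynomial.C_add, add_assoc]
  rw [Finset.prod_congr rfl h1]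
  exact prod_invOn (GF F n) (fun w => s + w) (fun w hw => add_mem_GF hs hw)
    (fun a _ b _ hab => by exact add_left_cancel hab)
    (fun w => Polynomial.X + Polynomial.C w)

lemma vP_map {M : Matrix (Fin n) (Fin n) F} (hM : IsUnit M) :
    Polynomial.map (glAct M : MvPolynomial (Fin n) F →ₐ[F] _).toRingHom (vP F n) = vP F n := by
  classical
  rw [vP, Polynomial.map_prod]
  have h1 : ∀ w ∈ GF F n,
      Polynomial.map (glAct M : MvPolynomial (Fin n) F →ₐ[F] _).toRingHom
          (Polynomial.X + Polynomial.C w)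
        = Polynomial.X + Polynomial.C (glAct M w) := by
    intro w _
    rw [Polynomial.map_add, Polynomial.map_X, Polynomial.map_C]
    rfl
  rw [Finset.prod_congr rfl h1]
  exact prod_invOn (GF F n) (fun w => glAct M w) (fun w hw => glAct_mem_GF M hw)
    (fun a _ b _ hab => glAct_injective hM hab)
    (fun w => Polynomial.X + Polynomial.C w)

end Mui

namespace Mui
variable {F : Type*} [Field F] [Fintype F] {n : ℕ}

lemma castSucc_image_lt (i : Fin n) :
    Fin.castSucc '' {j : Fin n | j < i} = {j : Fin (n + 1) | j < Fin.castSucc i} := by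
  ext j'
  constructor
  · rintro ⟨j, hj, rfl⟩
    exact Fin.castSucc_lt_castSucc_iff.2 hj
  · intro hj'
    have hne : j' ≠ Fin.last n :=
      ne_of_lt (lt_of_lt_of_le hj' (Fin.le_last _))
    obtain ⟨j, rfl⟩ := Fin.exists_castSucc_eq.2 hne
    exact ⟨j, Fin.castSucc_lt_castSucc_iff.1 hj', rfl⟩

lemma castSucc_image_univ :
    Fin.castSucc '' (Set.univ : Set (Fin n)) = {j : Fin (n + 1) | j < Fin.last n} := by
  ext j'
  constructor
  · rintro ⟨j, _, rfl⟩
    exact Fin.castSucc_lt_last j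
  · intro hj'
    obtain ⟨j, rfl⟩ := Fin.exists_castSucc_eq.2 (ne_of_lt hj')
    exact ⟨j, trivial, rfl⟩

lemma emb_image_span (s : Set (Fin n)) :
    (emb : MvPolynomial (Fin n) F →ₐ[F] _) ''
        ↑(Submodule.span F ((X : Fin n → MvPolynomial (Fin n) F) '' s)) =
      ↑(Submodule.span F ((X : Fin (n + 1) → MvPolynomial (Fin (n + 1)) F) ''
        (Fin.castSucc '' s))) := by
  have h1 : (emb : MvPolynomial (Fin n) F →ₐ[F] _) ''
      ↑(Submodule.span F ((X : Fin n → MvPolynomial (Fin n) F) '' s)) =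
      ↑(Submodule.map (emb : MvPolynomial (Fin n) F →ₐ[F] _).toLinearMap
        (Submodule.span F ((X : Fin n → MvPolynomial (Fin n) F) '' s))) := rfl
  rw [h1, Submodule.map_span]
  congr 2
  rw [← Set.image_comp, ← Set.image_comp]
  refine Set.image_congr fun j _ => ?_
  show rename Fin.castSucc (X j) = X j.castSucc
  rw [rename_X]

lemma emb_image_WF (i : Fin n) :
    (emb : MvPolynomial (Fin n) F →ₐ[F] _) '' ↑(WF F n i) =
      ↑(WF F (n + 1) (Fin.castSucc i)) := by
  rw [coe_WF, coe_WF, emb_image_span, castSucc_image_lt]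

lemma emb_image_GF :
    (emb : MvPolynomial (Fin n) F →ₐ[F] _) '' ↑(GF F n) =
      ↑(WF F (n + 1) (Fin.last n)) := by
  rw [coe_WF, coe_GF, ← Set.image_univ, emb_image_span, castSucc_image_univ]

lemma emb_injective : Function.Injective (emb : MvPolynomial (Fin n) F →ₐ[F] _) :=
  rename_injective _ (Fin.castSucc_injective n)

lemma emb_Vp (i : Fin n) : emb (Vp F n i) = Vp F (n + 1) (Fin.castSucc i) := by
  rw [Vp, Vp, map_prod]
  refine Finset.prod_bij (fun w _ => emb w) ?_ ?_ ?_ ?_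
  · intro a ha
    rw [← Finset.mem_coe, ← emb_image_WF]
    exact ⟨a, ha, rfl⟩
  · intro a _ b _ hab
    exact emb_injective hab
  · intro b hb
    rw [← Finset.mem_coe, ← emb_image_WF] at hb
    obtain ⟨a, ha, rfl⟩ := hb
    exact ⟨a, Finset.mem_coe.1 ha, rfl⟩
  · intro a _
    rw [map_add, emb, rename_X]

lemma Phi_symm_vP : (Phi F n).symm (vP F n) = Vp F (n + 1) (Fin.last n) := by
  rw [vP, map_prod, Vp]
  refine Finset.prod_bij (fun w _ => emb w) ?_ ?_ ?_ ?_
  · intro a ha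
    rw [← Finset.mem_coe, ← emb_image_GF]
    exact ⟨a, ha, rfl⟩
  · intro a _ b _ hab
    exact emb_injective hab
  · intro b hb
    rw [← Finset.mem_coe, ← emb_image_GF] at hb
    obtain ⟨a, ha, rfl⟩ := hb
    exact ⟨a, Finset.mem_coe.1 ha, rfl⟩
  · intro a _
    rw [map_add, Phi_symm_X, Phi_symm_C]

lemma emb_mem_adjoin {r : MvPolynomial (Fin n) F}
    (hr : r ∈ Algebra.adjoin F (Set.range (Vp F n))) :
    emb r ∈ Algebra.adjoin F (Set.range (Vp F (n + 1))) := by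
  have h1 : emb r ∈ (Algebra.adjoin F (Set.range (Vp F n))).map
      (emb : MvPolynomial (Fin n) F →ₐ[F] _) := ⟨r, hr, rfl⟩
  rw [AlgHom.map_adjoin] at h1
  refine Algebra.adjoin_mono ?_ h1
  rintro w ⟨_, ⟨i, rfl⟩, rfl⟩
  exact ⟨Fin.castSucc i, (emb_Vp i).symm⟩

end Mui

namespace Mui
variable {F : Type*} [Field F] [Fintype F] {n : ℕ}

open Polynomial in
lemma degree_comp_linear (r : Polynomial (MvPolynomial (Fin n) F)) (s : MvPolynomial (Fin n) F) :
    (r.comp (Polynomial.X + Polynomial.C s)).degree ≤ r.degree := by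
  rcases eq_or_ne (r.comp (Polynomial.X + Polynomial.C s)) 0 with h | h
  · rw [h, degree_zero]; exact bot_le
  · have hr : r ≠ 0 := fun hr0 => h (by rw [hr0, zero_comp])
    rw [degree_eq_natDegree h, degree_eq_natDegree hr, Nat.cast_le]
    calc (r.comp (Polynomial.X + Polynomial.C s)).natDegree
        ≤ r.natDegree * (Polynomial.X + Polynomial.C s).natDegree := natDegree_comp_le
      _ = r.natDegree := by rw [natDegree_X_add_C, mul_one]

open Polynomial in
lemma inner_lemma
    (IHn : ∀ r : MvPolynomial (Fin n) F,
      (∀ M : Matrix (Fin n) (Fin n) F, Uni M → glAct M r = r) →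
      r ∈ Algebra.adjoin F (Set.range (Vp F n))) :
    ∀ (N : ℕ) (p : Polynomial (MvPolynomial (Fin n) F)), p.natDegree ≤ N →
    (∀ c : Fin n → F, p.comp (Polynomial.X + Polynomial.C (sc c)) = p) →
    (∀ M : Matrix (Fin n) (Fin n) F, Uni M →
      Polynomial.map (glAct M : MvPolynomial (Fin n) F →ₐ[F] _).toRingHom p = p) →
    (Phi F n).symm p ∈ Algebra.adjoin F (Set.range (Vp F (n + 1))) := by
  classical
  intro N
  induction N using Nat.strong_induction_on with
  | _ N IH =>
  intro p hdeg htr hbl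
  have hv : (vP F n).Monic := monic_vP
  set v : Polynomial (MvPolynomial (Fin n) F) := vP F n with hvdef
  set g : Polynomial (MvPolynomial (Fin n) F) := p /ₘ v with hgdef
  set r : Polynomial (MvPolynomial (Fin n) F) := p %ₘ v with hrdef
  have hsplit : r + v * g = p := modByMonic_add_div p v
  have hrq : r.degree < v.degree := degree_modByMonic_lt p hv
  -- translation invariance descends to g and r
  have key : ∀ s ∈ GF F n, g.comp (Polynomial.X + Polynomial.C s) = g ∧
      r.comp (Polynomial.X + Polynomial.C s) = r := by
    intro s hs
    obtain ⟨c, hc⟩ := mem_GF.1 hs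
    have hc' : sc c = s := hc
    have hpc : p.comp (Polynomial.X + Polynomial.C s) = p := by rw [← hc']; exact htr c
    have h1 : r.comp (Polynomial.X + Polynomial.C s) +
        v * g.comp (Polynomial.X + Polynomial.C s) = p := by
      calc r.comp (Polynomial.X + Polynomial.C s) +
            v * g.comp (Polynomial.X + Polynomial.C s)
          = r.comp (Polynomial.X + Polynomial.C s) +
            (v.comp (Polynomial.X + Polynomial.C s)) *
              g.comp (Polynomial.X + Polynomial.C s) := by
            rw [hvdef, vP_comp hs]
        _ = (r + v * g).comp (Polynomial.X + Polynomial.C s) := by rw [add_comp, mul_comp]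
        _ = p.comp (Polynomial.X + Polynomial.C s) := by rw [hsplit]
        _ = p := hpc
    have h2 : (r.comp (Polynomial.X + Polynomial.C s)).degree < v.degree :=
      lt_of_le_of_lt (degree_comp_linear r s) hrq
    have huniq := div_modByMonic_unique (g.comp (Polynomial.X + Polynomial.C s))
      (r.comp (Polynomial.X + Polynomial.C s)) hv ⟨h1, h2⟩
    exact ⟨huniq.1.symm, huniq.2.symm⟩
  -- block invariance descends to g and r
  have keyb : ∀ M : Matrix (Fin n) (Fin n) F, Uni M →
      Polynomial.map (glAct M : MvPolynomial (Fin n) F →ₐ[F] _).toRingHom g = g ∧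
      Polynomial.map (glAct M : MvPolynomial (Fin n) F →ₐ[F] _).toRingHom r = r := by
    intro M hM
    have h1 : Polynomial.map (glAct M : MvPolynomial (Fin n) F →ₐ[F] _).toRingHom r +
        v * Polynomial.map (glAct M : MvPolynomial (Fin n) F →ₐ[F] _).toRingHom g = p := by
      calc Polynomial.map (glAct M : MvPolynomial (Fin n) F →ₐ[F] _).toRingHom r +
            v * Polynomial.map (glAct M : MvPolynomial (Fin n) F →ₐ[F] _).toRingHom g
          = Polynomial.map (glAct M : MvPolynomial (Fin n) F →ₐ[F] _).toRingHom r +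
            (Polynomial.map (glAct M : MvPolynomial (Fin n) F →ₐ[F] _).toRingHom v) *
              Polynomial.map (glAct M : MvPolynomial (Fin n) F →ₐ[F] _).toRingHom g := by
            rw [hvdef, vP_map hM.isUnit]
        _ = Polynomial.map (glAct M : MvPolynomial (Fin n) F →ₐ[F] _).toRingHom (r + v * g) := by
            rw [Polynomial.map_add, Polynomial.map_mul]
        _ = p := by rw [hsplit]; exact hbl M hM
    have h2 : (Polynomial.map (glAct M : MvPolynomial (Fin n) F →ₐ[F] _).toRingHom r).degree
        < v.degree := lt_of_le_of_lt (Polynomial.degree_map_le (f := (glAct M : MvPolynomial (Fin n) F →ₐ[F] _).toRingHom) (p := r)) hrq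
    have huniq := div_modByMonic_unique _ _ hv ⟨h1, h2⟩
    exact ⟨huniq.1.symm, huniq.2.symm⟩
  -- r is a constant
  obtain ⟨a, ha⟩ : ∃ a, r = Polynomial.C a := by
    refine ⟨r.eval 0, ?_⟩
    have heval : ∀ s ∈ GF F n, r.eval s = r.eval 0 := by
      intro s hs
      have h1 := (key s hs).2
      have h2 := congrArg (Polynomial.eval (0 : MvPolynomial (Fin n) F)) h1
      rw [eval_comp, Polynomial.eval_add, Polynomial.eval_X, Polynomial.eval_C, zero_add] at h2
      exact h2
    by_contra hne
    have hr' : r - Polynomial.C (r.eval 0) ≠ 0 := sub_ne_zero.2 hne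
    have hsub : GF F n ⊆ (r - Polynomial.C (r.eval 0)).roots.toFinset := by
      intro s hs
      rw [Multiset.mem_toFinset, mem_roots hr']
      simp [IsRoot, heval s hs]
    have hcard : (GF F n).card ≤ (r - Polynomial.C (r.eval 0)).natDegree :=
      le_trans (Finset.card_le_card hsub)
        (le_trans (r - Polynomial.C (r.eval 0)).roots.toFinset_card_le (card_roots' _))
    have h0 : (0 : WithBot ℕ) < v.degree :=
      natDegree_pos_iff_degree_pos.1 (by rw [hvdef, natDegree_vP]; exact card_GF_pos)
    have hdeg' : (r - Polynomial.C (r.eval 0)).degree < v.degree :=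
      lt_of_le_of_lt (degree_sub_le _ _) (max_lt hrq (lt_of_le_of_lt degree_C_le h0))
    have : (r - Polynomial.C (r.eval 0)).natDegree < v.natDegree :=
      natDegree_lt_natDegree hr' hdeg'
    rw [hvdef, natDegree_vP] at this
    omega
  -- the constant term is invariant, hence lies in the small adjoin
  have hr0 : a ∈ Algebra.adjoin F (Set.range (Vp F n)) := by
    refine IHn _ fun M hM => ?_
    have h1 := (keyb M hM).2
    rw [ha, Polynomial.map_C] at h1
    have h2 : glAct M a = a := by
      have := Polynomial.C_injective h1
      exact this
    exact h2
  rcases eq_or_ne g 0 with hg | hg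
  · -- p is the constant a
    have hp : p = Polynomial.C a := by rw [← hsplit, hg, mul_zero, add_zero, ha]
    rw [hp, Phi_symm_C]
    exact emb_mem_adjoin hr0
  · -- recursive step
    have hvne : v ≠ 0 := hv.ne_zero
    have hvd : 1 ≤ v.natDegree := by rw [hvdef, natDegree_vP]; exact card_GF_pos
    have hdegp : p.natDegree = v.natDegree + g.natDegree := by
      have h1 : r.degree < (v * g).degree := by
        rw [degree_mul]
        exact lt_of_lt_of_le hrq (le_add_of_nonneg_right (zero_le_degree_iff.2 hg))
      have h2 : p.degree = (v * g).degree := by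
        rw [← hsplit, degree_add_eq_right_of_degree_lt h1]
      rw [natDegree_eq_of_degree_eq h2, natDegree_mul hvne hg]
    have hglt : g.natDegree < N := by omega
    have hgmem := IH g.natDegree hglt g le_rfl
      (fun c => (key (sc c) (mem_GF.2 ⟨c, rfl⟩)).1)
      (fun M hM => (keyb M hM).1)
    have hfin : (Phi F n).symm p =
        emb a + Vp F (n + 1) (Fin.last n) * (Phi F n).symm g := by
      rw [← hsplit, ha, map_add, map_mul, Phi_symm_C, Phi_symm_vP]
    rw [hfin]
    exact Subalgebra.add_mem _ (emb_mem_adjoin hr0)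
      (Subalgebra.mul_mem _ (Algebra.subset_adjoin ⟨Fin.last n, rfl⟩) hgmem)

end Mui

namespace Mui
variable {F : Type*} [Field F] [Fintype F]

theorem hard_dir : ∀ (n : ℕ) (f : MvPolynomial (Fin n) F),
    (∀ M : Matrix (Fin n) (Fin n) F, Uni M → glAct M f = f) →
    f ∈ Algebra.adjoin F (Set.range (Vp F n)) := by
  intro n
  induction n with
  | zero =>
    intro f _
    obtain ⟨a, rfl⟩ := C_surjective (Fin 0) f
    exact Subalgebra.algebraMap_mem _ a
  | succ n IHn =>
    intro f hf
    have h1 : ∀ c : Fin n → F,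
        (Phi F n f).comp (Polynomial.X + Polynomial.C (sc c)) = Phi F n f := fun c => by
      rw [← Phi_glAct_tmat, hf _ (uni_tmat c)]
    have h2 : ∀ M : Matrix (Fin n) (Fin n) F, Uni M →
        Polynomial.map (glAct M : MvPolynomial (Fin n) F →ₐ[F] _).toRingHom (Phi F n f)
          = Phi F n f := fun M hM => by
      rw [← Phi_glAct_bmat, hf _ (uni_bmat hM)]
    have := inner_lemma IHn (Phi F n f).natDegree (Phi F n f) le_rfl h1 h2
    rwa [AlgEquiv.symm_apply_apply] at this

end Mui


/-- Mui's theorem: the invariants of `F_q[x_1, …, x_n]` under the unipotent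
group `U` of upper-triangular matrices with `1`'s on the diagonal form the
polynomial algebra on `V_1, …, V_n`, where
`V_i = ∏_{w ∈ span(x_1, …, x_{i-1})} (x_i + w)`. -/
theorem stmt_2 (F : Type*) [Field F] [Fintype F] (n : ℕ)
    (W : Fin n → Finset (MvPolynomial (Fin n) F))
    (hW : ∀ i : Fin n, ↑(W i) =
      (Submodule.span F ((X : Fin n → MvPolynomial (Fin n) F) '' {j : Fin n | j < i}) :
        Set (MvPolynomial (Fin n) F)))
    (V : Fin n → MvPolynomial (Fin n) F)
    (hV : ∀ i : Fin n, V i = ∏ w ∈ W i, (X i + w)) :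
    { f : MvPolynomial (Fin n) F |
      ∀ σ : GL (Fin n) F,
        ((∀ i : Fin n, (σ : Matrix (Fin n) (Fin n) F) i i = 1) ∧
          (∀ i j : Fin n, j < i → (σ : Matrix (Fin n) (Fin n) F) i j = 0)) →
        glAct ((σ : Matrix (Fin n) (Fin n) F)) f = f } =
      ((Algebra.adjoin F (Set.range V) : Subalgebra F (MvPolynomial (Fin n) F)) :
        Set (MvPolynomial (Fin n) F)) := by
  have hWF : W = Mui.WF F n := by
    funext i
    exact Finset.coe_injective (by rw [hW i, Mui.coe_WF])
  have hVp : V = Mui.Vp F n := by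
    funext i
    rw [hV i, Mui.Vp, hWF]
  ext f
  simp only [Set.mem_setOf_eq, SetLike.mem_coe, hVp]
  constructor
  · intro h
    refine Mui.hard_dir n f fun M hM => ?_
    have hσ := h (Matrix.GeneralLinearGroup.mkOfDetNeZero M hM.det_ne_zero)
    simpa using hσ ⟨hM.1, hM.2⟩
  · intro h σ hσ
    exact Mui.easy_dir h hσ
end

section
/- For any n ≥ 2 and any i with 0 ≤ i ≤ n, the Dickson invariants satisfy Q_{n,i}(x_1, …, x_n) = Q_{n−1,i−1}(x_1, …, x_{n−1})^q + V_n(x_1, …, x_n)^{q−1} · Q_{n−1,i}(x_1, …, x_{n−1}), where V_n = ∏_{w ∈ span_{𝔽_q}(x_1,…,x_{n−1})}(x_n + w), and the conventions Q_{k,k} = 1 and Q_{k,j} = 0 for j < 0 or j > k are used. -/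
open MvPolynomial

section helpers

lemma my_prod_X_sub_C (F : Type*) [Field F] [Fintype F] :
    ∏ c : F, (Polynomial.X - Polynomial.C c) = Polynomial.X ^ Fintype.card F - Polynomial.X := by
  classical
  have hq : 1 < Fintype.card F := Fintype.one_lt_card
  have hmon : ((Polynomial.X : Polynomial F) ^ Fintype.card F - Polynomial.X).Monic :=
    Polynomial.monic_X_pow_sub (by simpa using (by exact_mod_cast hq : (1 : WithBot ℕ) < Fintype.card F))
  have hroots := FiniteField.roots_X_pow_card_sub_X F
  have hcard : Multiset.card ((Polynomial.X ^ Fintype.card F - Polynomial.X : Polynomial F).roots) =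
      ((Polynomial.X : Polynomial F) ^ Fintype.card F - Polynomial.X).natDegree := by
    rw [hroots, FiniteField.X_pow_card_sub_X_natDegree_eq F hq]
    simp
  have h := Polynomial.prod_multiset_X_sub_C_of_monic_of_roots_card_eq hmon hcard
  rw [hroots] at h
  rw [← h]
  rfl

lemma my_prod_X_add_C (F : Type*) [Field F] [Fintype F] :
    ∏ c : F, (Polynomial.X + Polynomial.C c) = Polynomial.X ^ Fintype.card F - Polynomial.X := by
  rw [← my_prod_X_sub_C F, ← Equiv.prod_comp (Equiv.neg F) (fun c => Polynomial.X - Polynomial.C c)]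
  simp [sub_neg_eq_add]

lemma my_key_field (F : Type*) [Field F] [Fintype F] {L : Type*} [Field L]
    (g : F →+* L) (y a : L) :
    ∏ c : F, (y + g c * a) =
      y ^ Fintype.card F - a ^ (Fintype.card F - 1) * y := by
  classical
  have hq : 1 < Fintype.card F := Fintype.one_lt_card
  by_cases ha : a = 0
  · simp [ha, Finset.prod_const, zero_pow (by omega : Fintype.card F - 1 ≠ 0)]
  · have hb : ∀ b : L, ∏ c : F, (b + g c) = b ^ Fintype.card F - b := by
      intro b
      have := congrArg (Polynomial.eval₂ g b) (my_prod_X_add_C F)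
      rw [Polynomial.eval₂_sub, Polynomial.eval₂_pow, Polynomial.eval₂_X] at this
      rw [← this, Polynomial.eval₂_finset_prod]
      simp
    have key := hb (y * a⁻¹)
    have h0 : ∏ c : F, (y + g c * a) = a ^ Fintype.card F * ∏ c : F, (y * a⁻¹ + g c) := by
      calc ∏ c : F, (y + g c * a) = ∏ c : F, a * (y * a⁻¹ + g c) := by
            apply Finset.prod_congr rfl; intro c _; field_simp
        _ = (∏ _c : F, a) * ∏ c : F, (y * a⁻¹ + g c) := by rw [Finset.prod_mul_distrib]
        _ = a ^ Fintype.card F * ∏ c : F, (y * a⁻¹ + g c) := by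
            rw [Finset.prod_const, Finset.card_univ]
    rw [h0, key, mul_sub]
    have h1 : a ^ Fintype.card F * (y * a⁻¹) ^ Fintype.card F = y ^ Fintype.card F := by
      rw [mul_pow, mul_left_comm, ← mul_pow, mul_inv_cancel₀ ha, one_pow, mul_one]
    have h2 : a ^ Fintype.card F * (y * a⁻¹) = a ^ (Fintype.card F - 1) * y := by
      have h3 : a ^ Fintype.card F = a ^ (Fintype.card F - 1) * a := by
        rw [← pow_succ, Nat.sub_add_cancel hq.le]
      rw [h3]; field_simp
    rw [h1, h2]

lemma my_key_domain (F : Type*) [Field F] [Fintype F] {A : Type*} [CommRing A] [IsDomain A]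
    (g : F →+* A) (y a : A) :
    ∏ c : F, (y + g c * a) =
      y ^ Fintype.card F - a ^ (Fintype.card F - 1) * y := by
  classical
  apply IsFractionRing.injective A (FractionRing A)
  rw [map_prod, map_sub, map_mul, map_pow, map_pow]
  rw [← my_key_field F ((algebraMap A (FractionRing A)).comp g)
    (algebraMap A (FractionRing A) y) (algebraMap A (FractionRing A) a)]
  apply Finset.prod_congr rfl
  intro c _
  simp

end helpers

/-- The recursion formula relating the Dickson invariants in `n` variables to
those in `n - 1` variables:
`Q_{n,i} = Q_{n-1,i-1}^q + V_n^{q-1} * Q_{n-1,i}`, where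
`V_n = ∏_{w ∈ span(x_1, …, x_{n-1})} (x_n + w)`, with the conventions
`Q_{k,k} = 1` and `Q_{k,j} = 0` for `j < 0` or `j > k`. -/
theorem stmt_3 (F : Type*) [Field F] [Fintype F] (n : ℕ) (hn : 2 ≤ n)
    (Vn Vm : Finset (MvPolynomial (Fin n) F))
    (hVn : ↑Vn =
      (Submodule.span F (Set.range (X : Fin n → MvPolynomial (Fin n) F)) :
        Set (MvPolynomial (Fin n) F)))
    (hVm : ↑Vm =
      (Submodule.span F ((X : Fin n → MvPolynomial (Fin n) F) ''
          {j : Fin n | (j : ℕ) < n - 1}) : Set (MvPolynomial (Fin n) F)))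
    (Qn Qm : ℤ → MvPolynomial (Fin n) F)
    (hQn : ∏ w ∈ Vn, (Polynomial.X + Polynomial.C w) =
      ∑ i ∈ Finset.range (n + 1),
        Polynomial.C ((-1 : MvPolynomial (Fin n) F) ^ (n - i) * Qn i) *
          Polynomial.X ^ Fintype.card F ^ i)
    (hQm : ∏ w ∈ Vm, (Polynomial.X + Polynomial.C w) =
      ∑ i ∈ Finset.range n,
        Polynomial.C ((-1 : MvPolynomial (Fin n) F) ^ (n - 1 - i) * Qm i) *
          Polynomial.X ^ Fintype.card F ^ i)
    (hQm0 : ∀ i : ℤ, i < 0 → Qm i = 0)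
    (hQmtop : ∀ i : ℤ, (n : ℤ) - 1 < i → Qm i = 0) :
    ∀ i : ℤ, 0 ≤ i → i ≤ (n : ℤ) →
      Qn i = Qm (i - 1) ^ Fintype.card F +
        (∏ w ∈ Vm, (X (⟨n - 1, by omega⟩ : Fin n) + w)) ^ (Fintype.card F - 1) * Qm i := by
  classical
  set q := Fintype.card F with hq_def
  have hq : 1 < q := Fintype.one_lt_card
  obtain ⟨p, hchar⟩ := CharP.exists F
  haveI := hchar
  obtain ⟨m, hp, hcard⟩ := FiniteField.card F p
  haveI : Fact p.Prime := ⟨hp⟩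
  rw [← hq_def] at hcard
  haveI hcharR : CharP (MvPolynomial (Fin n) F) p :=
    charP_of_injective_ringHom (MvPolynomial.C_injective (Fin n) F) p
  haveI hcharRX : CharP (Polynomial (MvPolynomial (Fin n) F)) p :=
    charP_of_injective_ringHom (Polynomial.C_injective) p
  set e : Fin n := ⟨n - 1, by omega⟩ with he_def
  set P := ∏ w ∈ Vm, (Polynomial.X + Polynomial.C w) with hP_def
  set V := ∏ w ∈ Vm, (X e + w) with hV_def
  have hmemVm : ∀ u, u ∈ Vm →
      u ∈ Submodule.span F ((X : Fin n → MvPolynomial (Fin n) F) ''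
        {j : Fin n | (j : ℕ) < n - 1}) := by
    intro u hu
    have h := Finset.mem_coe.mpr hu
    rw [hVm] at h
    exact h
  have hcoeffVm : ∀ u ∈ Vm, MvPolynomial.coeff (Finsupp.single e 1) u = 0 := by
    intro u hu
    have hle : Submodule.span F ((X : Fin n → MvPolynomial (Fin n) F) ''
        {j : Fin n | (j : ℕ) < n - 1}) ≤
        LinearMap.ker (MvPolynomial.lcoeff F (Finsupp.single e 1)) := by
      rw [Submodule.span_le]
      rintro _ ⟨j, hj, rfl⟩
      simp only [SetLike.mem_coe, LinearMap.mem_ker, MvPolynomial.lcoeff_apply]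
      rw [MvPolynomial.coeff_X', if_neg]
      intro h
      have hje : j = e := Finsupp.single_left_injective (one_ne_zero (α := ℕ)) h
      rw [hje] at hj
      simp only [Set.mem_setOf_eq, he_def] at hj
      omega
    exact hle (hmemVm u hu)
  have hVn_iff : ∀ v, v ∈ Vn ↔ ∃ c : F, ∃ w ∈ Vm,
      MvPolynomial.C c * X e + w = v := by
    intro v
    constructor
    · intro hv
      have hv' : v ∈ Submodule.span F (Set.range (X : Fin n → MvPolynomial (Fin n) F)) := by
        have h := Finset.mem_coe.mpr hv
        rw [hVn] at h
        exact h
      have hrange : Set.range (X : Fin n → MvPolynomial (Fin n) F) =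
          ((X : Fin n → MvPolynomial (Fin n) F) '' {j : Fin n | (j : ℕ) < n - 1}) ∪
            {X e} := by
        ext u
        simp only [Set.mem_range, Set.mem_union, Set.mem_image, Set.mem_singleton_iff]
        constructor
        · rintro ⟨j, rfl⟩
          by_cases hj : (j : ℕ) < n - 1
          · exact Or.inl ⟨j, hj, rfl⟩
          · refine Or.inr ?_
            have hje : j = e := Fin.ext (by have := j.isLt; simp only [he_def]; omega)
            rw [hje]
        · rintro (⟨j, _, rfl⟩ | rfl) <;> exact ⟨_, rfl⟩
      rw [hrange, Submodule.span_union] at hv'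
      obtain ⟨w, hw, z, hz, rfl⟩ := Submodule.mem_sup.mp hv'
      obtain ⟨c, rfl⟩ := Submodule.mem_span_singleton.mp hz
      refine ⟨c, w, ?_, ?_⟩
      · rw [← Finset.mem_coe, hVm]; exact hw
      · rw [MvPolynomial.smul_eq_C_mul]; ring
    · rintro ⟨c, w, hw, rfl⟩
      rw [← Finset.mem_coe, hVn]
      refine Submodule.add_mem _ ?_ ?_
      · have h : (c : F) • (X e : MvPolynomial (Fin n) F) ∈
            Submodule.span F (Set.range (X : Fin n → MvPolynomial (Fin n) F)) :=
          Submodule.smul_mem _ c (Submodule.subset_span ⟨e, rfl⟩)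
        rwa [MvPolynomial.smul_eq_C_mul] at h
      · exact Submodule.span_mono (Set.image_subset_range _ _) (hmemVm w hw)
  have hinj : ∀ (c c' : F) (w w' : MvPolynomial (Fin n) F), w ∈ Vm → w' ∈ Vm →
      MvPolynomial.C c * X e + w = MvPolynomial.C c' * X e + w' → c = c' ∧ w = w' := by
    intro c c' w w' hw hw' heq
    have hc : c = c' := by
      have h := congrArg (MvPolynomial.coeff (Finsupp.single e 1)) heq
      rw [MvPolynomial.coeff_add, MvPolynomial.coeff_add, hcoeffVm w hw, hcoeffVm w' hw',
        MvPolynomial.coeff_C_mul, MvPolynomial.coeff_C_mul, MvPolynomial.coeff_X] at h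
      simpa using h
    subst hc
    exact ⟨rfl, add_left_cancel heq⟩
  have hbij : ∏ v ∈ Vn, (Polynomial.X + Polynomial.C v)
      = ∏ cw ∈ Finset.univ ×ˢ Vm,
          (Polynomial.X + Polynomial.C (MvPolynomial.C cw.1 * X e + cw.2)) := by
    refine (Finset.prod_bij (fun cw _ => MvPolynomial.C cw.1 * X e + cw.2) ?_ ?_ ?_ ?_).symm
    · rintro ⟨c, w⟩ hcw
      exact (hVn_iff _).mpr ⟨c, w, (Finset.mem_product.mp hcw).2, rfl⟩
    · rintro ⟨c, w⟩ h1 ⟨c', w'⟩ h2 heq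
      obtain ⟨hc, hw⟩ := hinj c c' w w' (Finset.mem_product.mp h1).2
        (Finset.mem_product.mp h2).2 heq
      simp only [Prod.mk.injEq]
      exact ⟨hc, hw⟩
    · intro v hv
      obtain ⟨c, w, hw, h⟩ := (hVn_iff v).mp hv
      exact ⟨(c, w), Finset.mem_product.mpr ⟨Finset.mem_univ _, hw⟩, h⟩
    · intros; rfl
  -- Frobenius facts
  have hfrobP : ∀ (u v : Polynomial (MvPolynomial (Fin n) F)) (k : ℕ),
      (u + v) ^ q ^ k = u ^ q ^ k + v ^ q ^ k := by
    intro u v k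
    rw [hcard, ← pow_mul]
    exact add_pow_char_pow u v p _
  have hsum_pow : ∀ (f : ℕ → Polynomial (MvPolynomial (Fin n) F)),
      (∑ i ∈ Finset.range n, f i) ^ q = ∑ i ∈ Finset.range n, f i ^ q := by
    intro f
    rw [hcard]
    exact sum_pow_char_pow _ _ _ _
  have hneg : (-1 : MvPolynomial (Fin n) F) ^ q = -1 := by
    rw [hcard]
    exact neg_one_pow_char_pow (MvPolynomial (Fin n) F) p _
  -- evaluation of P
  have hevalP : ∀ t : MvPolynomial (Fin n) F, Polynomial.eval t P =
      ∑ i ∈ Finset.range n, ((-1 : MvPolynomial (Fin n) F) ^ (n - 1 - i) * Qm i) * t ^ q ^ i := by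
    intro t
    rw [hQm, Polynomial.eval_finset_sum]
    simp
  have hcomp : ∀ a : MvPolynomial (Fin n) F,
      ∏ w ∈ Vm, (Polynomial.X + Polynomial.C (a + w)) =
        P + Polynomial.C (Polynomial.eval a P) := by
    intro a
    have h1 : ∏ w ∈ Vm, (Polynomial.X + Polynomial.C (a + w))
        = Polynomial.eval₂ Polynomial.C (Polynomial.X + Polynomial.C a) P := by
      rw [hP_def, Polynomial.eval₂_finset_prod]
      apply Finset.prod_congr rfl
      intro w _
      rw [Polynomial.eval₂_add, Polynomial.eval₂_X, Polynomial.eval₂_C, Polynomial.C_add]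
      ring
    rw [h1, hevalP a, hQm, Polynomial.eval₂_finset_sum, map_sum Polynomial.C,
      ← Finset.sum_add_distrib]
    apply Finset.sum_congr rfl
    intro i _
    rw [Polynomial.eval₂_mul, Polynomial.eval₂_C, Polynomial.eval₂_pow, Polynomial.eval₂_X,
      hfrobP, mul_add, Polynomial.C_mul, map_pow]
    simp [map_mul, map_pow]
  have hVeval : V = Polynomial.eval (X e) P := by
    rw [hP_def, Polynomial.eval_prod]
    simp
    exact hV_def
  have hCpow : ∀ (c : F) (k : ℕ), (MvPolynomial.C c : MvPolynomial (Fin n) F) ^ q ^ k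
      = MvPolynomial.C c := by
    intro c k
    rw [← map_pow, FiniteField.pow_card_pow]
  have heval_c : ∀ c : F, Polynomial.eval (MvPolynomial.C c * X e) P
      = MvPolynomial.C c * V := by
    intro c
    rw [hevalP, hVeval, hevalP, Finset.mul_sum]
    apply Finset.sum_congr rfl
    intro i _
    rw [mul_pow, hCpow]
    ring
  -- the main identity
  have main : (∑ i ∈ Finset.range (n + 1),
        Polynomial.C ((-1 : MvPolynomial (Fin n) F) ^ (n - i) * Qn i) *
          Polynomial.X ^ q ^ i)
      = ∑ j ∈ Finset.range (n + 1),
        Polynomial.C ((-1 : MvPolynomial (Fin n) F) ^ (n - j) *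
          (Qm ((j : ℤ) - 1) ^ q + V ^ (q - 1) * Qm (j : ℤ))) * Polynomial.X ^ q ^ j := by
    rw [← hQn]
    calc ∏ v ∈ Vn, (Polynomial.X + Polynomial.C v)
        = ∏ cw ∈ Finset.univ ×ˢ Vm,
            (Polynomial.X + Polynomial.C (MvPolynomial.C cw.1 * X e + cw.2)) := hbij
      _ = ∏ c : F, ∏ w ∈ Vm,
            (Polynomial.X + Polynomial.C (MvPolynomial.C c * X e + w)) := by
          rw [Finset.prod_product]
      _ = ∏ c : F, (P + (Polynomial.C.comp MvPolynomial.C) c * Polynomial.C V) := by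
          apply Finset.prod_congr rfl
          intro c _
          rw [hcomp (MvPolynomial.C c * X e), heval_c c]
          simp [map_mul]
      _ = P ^ q - (Polynomial.C V) ^ (q - 1) * P :=
          my_key_domain F _ P (Polynomial.C V)
      _ = _ := by
          have hP1 : P ^ q = ∑ i ∈ Finset.range n,
              Polynomial.C ((-1 : MvPolynomial (Fin n) F) ^ (n - 1 - i) * Qm i ^ q) *
                Polynomial.X ^ q ^ (i + 1) := by
            rw [hQm, hsum_pow]
            apply Finset.sum_congr rfl
            intro i _
            rw [mul_pow, ← map_pow, ← pow_mul, ← pow_succ, mul_pow, pow_right_comm, hneg]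
          have hP2 : (Polynomial.C V) ^ (q - 1) * P = ∑ i ∈ Finset.range n,
              Polynomial.C ((-1 : MvPolynomial (Fin n) F) ^ (n - 1 - i) *
                (V ^ (q - 1) * Qm i)) * Polynomial.X ^ q ^ i := by
            rw [hQm, Finset.mul_sum]
            apply Finset.sum_congr rfl
            intro i _
            rw [← map_pow, ← mul_assoc, ← map_mul,
              show V ^ (q - 1) * ((-1 : MvPolynomial (Fin n) F) ^ (n - 1 - i) * Qm i)
                = (-1 : MvPolynomial (Fin n) F) ^ (n - 1 - i) * (V ^ (q - 1) * Qm i) from by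
                  ring]
          have hsplit : ∑ j ∈ Finset.range (n + 1),
              Polynomial.C ((-1 : MvPolynomial (Fin n) F) ^ (n - j) *
                (Qm ((j : ℤ) - 1) ^ q + V ^ (q - 1) * Qm (j : ℤ))) * Polynomial.X ^ q ^ j
              = (∑ j ∈ Finset.range (n + 1),
                  Polynomial.C ((-1 : MvPolynomial (Fin n) F) ^ (n - j) *
                    Qm ((j : ℤ) - 1) ^ q) * Polynomial.X ^ q ^ j)
                + ∑ j ∈ Finset.range (n + 1),
                  Polynomial.C ((-1 : MvPolynomial (Fin n) F) ^ (n - j) *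
                    (V ^ (q - 1) * Qm (j : ℤ))) * Polynomial.X ^ q ^ j := by
            rw [← Finset.sum_add_distrib]
            apply Finset.sum_congr rfl
            intro j _
            rw [mul_add, map_add, add_mul]
          have hfirst : ∑ j ∈ Finset.range (n + 1),
              Polynomial.C ((-1 : MvPolynomial (Fin n) F) ^ (n - j) *
                Qm ((j : ℤ) - 1) ^ q) * Polynomial.X ^ q ^ j = P ^ q := by
            rw [Finset.sum_range_succ', hP1]
            have h0 : Qm ((0 : ℕ) - 1 : ℤ) = 0 := hQm0 _ (by norm_num)
            rw [show (((0 : ℕ) : ℤ) - 1) = ((0 : ℤ) - 1) by norm_num] at h0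
            simp only [Nat.cast_zero] at h0 ⊢
            rw [h0, zero_pow (by omega : q ≠ 0), mul_zero, map_zero, zero_mul, add_zero]
            apply Finset.sum_congr rfl
            intro i hi
            have h1 : n - (i + 1) = n - 1 - i := by omega
            have h2 : ((i : ℕ) + 1 : ℤ) - 1 = (i : ℤ) := by ring
            rw [h1]
            congr 2
            push_cast
            rw [h2]
          have hsecond : ∑ j ∈ Finset.range (n + 1),
              Polynomial.C ((-1 : MvPolynomial (Fin n) F) ^ (n - j) *
                (V ^ (q - 1) * Qm (j : ℤ))) * Polynomial.X ^ q ^ j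
              = -((Polynomial.C V) ^ (q - 1) * P) := by
            rw [Finset.sum_range_succ, hQmtop (n : ℤ) (by omega), mul_zero, mul_zero,
              map_zero, zero_mul, add_zero, hP2, ← Finset.sum_neg_distrib]
            apply Finset.sum_congr rfl
            intro j hj
            have hjn : j < n := Finset.mem_range.mp hj
            rw [show ((-1 : MvPolynomial (Fin n) F) ^ (n - j))
                = -(-1 : MvPolynomial (Fin n) F) ^ (n - 1 - j) from by
                  rw [show n - j = (n - 1 - j) + 1 from by omega, pow_succ]; ring,
              neg_mul, map_neg]
            ring
          rw [hsplit, hfirst, hsecond]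
          ring
  -- coefficient extraction
  have hcoeff_sum : ∀ (f : ℕ → MvPolynomial (Fin n) F) (j : ℕ), j < n + 1 →
      Polynomial.coeff (∑ i ∈ Finset.range (n + 1),
        Polynomial.C (f i) * Polynomial.X ^ q ^ i) (q ^ j) = f j := by
    intro f j hj
    rw [Polynomial.finset_sum_coeff,
      Finset.sum_eq_single_of_mem j (Finset.mem_range.mpr hj)]
    · simp [Polynomial.coeff_C_mul, Polynomial.coeff_X_pow]
    · intro b _ hb
      have hne : q ^ j ≠ q ^ b := fun hh => hb (Nat.pow_right_injective hq hh).symm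
      simp [Polynomial.coeff_C_mul, Polynomial.coeff_X_pow, hne]
  have hext : ∀ j : ℕ, j ≤ n →
      Qn (j : ℤ) = Qm ((j : ℤ) - 1) ^ q + V ^ (q - 1) * Qm (j : ℤ) := by
    intro j hj
    have h := congrArg (fun Pq => Polynomial.coeff Pq (q ^ j)) main
    rw [hcoeff_sum _ j (by omega), hcoeff_sum _ j (by omega)] at h
    exact mul_left_cancel₀ (pow_ne_zero _ (neg_ne_zero.mpr one_ne_zero)) h
  intro i hi0 hin
  have hji : ((i.toNat : ℕ) : ℤ) = i := Int.toNat_of_nonneg hi0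
  rw [← hji]
  exact hext i.toNat (by omega)
end

section
/- Let U be a finite-dimensional vector space over the finite field 𝔽_q and let ℓ be a positive integer. If the power sum Σ_{u∈U} u^ℓ is nonzero in the symmetric algebra of U over 𝔽_q, then (q−1) divides ℓ and the sum of the digits of ℓ in its base-q representation is at least (q−1)·dim_{𝔽_q} U. -/
open MvPolynomial

section Aux

open Finset in
private lemma carry_free {p : ℕ} (hp : p.Prime) (a b : ℕ)
    (h : ¬ p ∣ (a + b).choose a) : ∀ i, a % p ^ i + b % p ^ i < p ^ i := by
  intro i
  rcases Nat.eq_zero_or_pos i with rfl | hi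
  · simp [Nat.mod_one]
  set B := max (Nat.log p (b + a) + 1) (i + 1) with hB
  have hkum := Nat.Prime.emultiplicity_choose' (p := p) (n := b) (k := a) (b := B) hp
    (lt_of_lt_of_le (Nat.lt_succ_self _) (le_max_left _ _))
  have h0 : emultiplicity p ((b + a).choose a) = 0 :=
    emultiplicity_eq_zero.2 (by rwa [add_comm] at h)
  rw [h0] at hkum
  have hempty : ({j ∈ Ico 1 B | p ^ j ≤ a % p ^ j + b % p ^ j} : Finset ℕ) = ∅ := by
    have := hkum.symm
    exact_mod_cast Finset.card_eq_zero.1 (by exact_mod_cast this)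
  by_contra hcon
  have hiB : i ∈ Ico 1 B := Finset.mem_Ico.2 ⟨hi, lt_of_lt_of_le (Nat.lt_succ_self i) (le_max_right _ _)⟩
  have : i ∈ ({j ∈ Ico 1 B | p ^ j ≤ a % p ^ j + b % p ^ j} : Finset ℕ) :=
    Finset.mem_filter.2 ⟨hiB, not_lt.1 hcon⟩
  simp [hempty] at this

private lemma sum_digits_add_aux {q : ℕ} (hq : 2 ≤ q) :
    ∀ n a b : ℕ, a + b ≤ n → (∀ i, a % q ^ i + b % q ^ i < q ^ i) →
      (Nat.digits q (a + b)).sum = (Nat.digits q a).sum + (Nat.digits q b).sum := by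
  intro n
  induction n using Nat.strong_induction_on with
  | _ n ih =>
    intro a b hab H
    rcases Nat.eq_zero_or_pos a with rfl | ha
    · simp
    rcases Nat.eq_zero_or_pos b with rfl | hb
    · simp
    have hq0 : 0 < q := by omega
    have h1 : a % q + b % q < q := by simpa using H 1
    have hmod : (a + b) % q = a % q + b % q := Nat.add_mod_of_add_mod_lt h1
    have hdiv : (a + b) / q = a / q + b / q := by
      rw [Nat.add_div hq0, if_neg (not_le.2 h1), add_zero]
    have H' : ∀ i, a / q % q ^ i + b / q % q ^ i < q ^ i := by
      intro i
      have e : ∀ x : ℕ, x / q % q ^ i = x % q ^ (i + 1) / q := fun x => by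
        rw [← Nat.mod_mul_right_div_self, ← pow_succ']
      rw [e a, e b]
      have h2 := H (i + 1)
      have hle : a % q ^ (i + 1) / q + b % q ^ (i + 1) / q
          ≤ (a % q ^ (i + 1) + b % q ^ (i + 1)) / q := by
        rw [Nat.le_div_iff_mul_le hq0, add_mul]
        exact Nat.add_le_add (Nat.div_mul_le_self _ _) (Nat.div_mul_le_self _ _)
      have hlt : (a % q ^ (i + 1) + b % q ^ (i + 1)) / q < q ^ i := by
        rw [Nat.div_lt_iff_lt_mul hq0, ← pow_succ]
        exact h2
      omega
    have hd1 : a / q < a := Nat.div_lt_self ha hq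
    have hd2 : b / q ≤ b := Nat.div_le_self b q
    have key := ih (a / q + b / q) (by omega) (a / q) (b / q) le_rfl H'
    rw [Nat.digits_def' hq (by omega : 0 < a + b), Nat.digits_def' hq ha, Nat.digits_def' hq hb,
      List.sum_cons, List.sum_cons, List.sum_cons, hmod, hdiv, key]
    omega

private lemma sum_digits_multinomial {p q : ℕ} (hp : p.Prime) {f : ℕ} (hf : 0 < f)
    (hq : q = p ^ f) {α : Type*} (s : Finset α) (k : α → ℕ)
    (h : ¬ p ∣ Nat.multinomial s k) :
    (Nat.digits q (∑ i ∈ s, k i)).sum = ∑ i ∈ s, (Nat.digits q (k i)).sum := by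
  have hq2 : 2 ≤ q := by
    rw [hq]
    calc 2 ≤ p := hp.two_le
      _ ≤ p ^ f := Nat.le_self_pow hf.ne' p
  induction s using Finset.cons_induction with
  | empty => simp
  | cons a s ha ih =>
    rw [Nat.multinomial_cons] at h
    have hchoose : ¬ p ∣ (k a + ∑ i ∈ s, k i).choose (k a) := fun hd => h (hd.mul_right _)
    have hmult : ¬ p ∣ Nat.multinomial s k := fun hd => h (hd.mul_left _)
    have Hp := carry_free hp (k a) (∑ i ∈ s, k i) hchoose
    have Hq : ∀ i, k a % q ^ i + (∑ j ∈ s, k j) % q ^ i < q ^ i := fun i => by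
      have := Hp (f * i); rwa [pow_mul, ← hq] at this
    rw [Finset.sum_cons, Finset.sum_cons,
      sum_digits_add_aux hq2 _ _ _ le_rfl Hq, ih hmult]

private lemma sub_one_le_sum_digits {q m : ℕ} (hq : 2 ≤ q) (hm : 0 < m)
    (hd : (q - 1) ∣ m) : q - 1 ≤ (Nat.digits q m).sum := by
  have hpos : 0 < (Nat.digits q m).sum := by
    by_contra h0
    push_neg at h0
    have h0' : (Nat.digits q m).sum = 0 := by omega
    have hall : ∀ d ∈ Nat.digits q m, d = 0 := List.sum_eq_zero_iff.1 h0'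
    have hz : ∀ L : List ℕ, (∀ d ∈ L, d = 0) → Nat.ofDigits q L = (0 : ℕ) := by
      intro L
      induction L with
      | nil => simp
      | cons d L ihL =>
        intro hdl
        simp [Nat.ofDigits_cons, hdl d (by simp),
          ihL (fun x hx => hdl x (by simp [hx]))]
    have hm0 := Nat.ofDigits_digits q m
    rw [hz _ hall] at hm0
    omega
  rcases Nat.lt_or_ge q 3 with h3 | h3
  · interval_cases q <;> omega
  · have hmod : q % (q - 1) = 1 := by
      rw [Nat.mod_eq_sub_mod (by omega : q - 1 <= q), show q - (q - 1) = 1 by omega,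
        Nat.mod_eq_of_lt (by omega)]
    have hcong := Nat.modEq_digits_sum (q - 1) q hmod m
    have : (q - 1) ∣ (Nat.digits q m).sum := by
      have h2 : m ≡ 0 [MOD q - 1] := (Nat.modEq_zero_iff_dvd).2 hd
      exact (Nat.modEq_zero_iff_dvd).1 (hcong.symm.trans h2)
    exact Nat.le_of_dvd hpos this

private lemma ne_zero_sum_pow {K : Type*} [Field K] [Fintype K] {m : ℕ}
    (h : (∑ x : K, x ^ m) ≠ 0) : 0 < m ∧ (Fintype.card K - 1) ∣ m := by
  classical
  have hm : m ≠ 0 := by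
    rintro rfl
    simp [FiniteField.cast_card_eq_zero] at h
  refine ⟨Nat.pos_of_ne_zero hm, ?_⟩
  by_contra hdvd
  apply h
  let φ : Kˣ ↪ K := ⟨fun x => x, Units.val_injective⟩
  have huniv : Finset.univ.map φ = Finset.univ \ {0} := by
    ext x
    simpa only [Finset.mem_map, Finset.mem_univ, Function.Embedding.coeFn_mk, true_and,
      Finset.mem_sdiff, Finset.mem_singleton, φ] using (show (∃ a : Kˣ, (a : K) = x) ↔ x ≠ 0 from isUnit_iff_ne_zero)
  calc ∑ x : K, x ^ m = ∑ x ∈ Finset.univ \ {(0 : K)}, x ^ m := by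
        rw [← Finset.sum_sdiff (Finset.subset_univ {0}), Finset.sum_singleton, zero_pow hm,
          add_zero]
    _ = ∑ x : Kˣ, (x : K) ^ m := by rw [← huniv, Finset.sum_map]; simp [φ]
    _ = 0 := by
        have hsu := FiniteField.sum_pow_units K m
        rw [if_neg hdvd] at hsu
        exact hsu

end Aux

/-- The power sum lemma (Campbell–Hughes–Pollack): if `U` is a
finite-dimensional `F_q`-vector space (realized as a space of linear forms,
i.e. degree-one homogeneous elements, inside a polynomial algebra, so that the
ambient polynomial algebra contains the symmetric algebra of `U`) and the power
sum `∑_{u ∈ U} u^ℓ` is nonzero, then `(q-1) ∣ ℓ` and the sum of the digits of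
`ℓ` in base `q` is at least `(q-1)·dim U`. -/
theorem stmt_8 (F : Type*) [Field F] [Fintype F] (ι : Type*)
    (U : Submodule F (MvPolynomial ι F))
    (hU : ∀ f ∈ U, f.IsHomogeneous 1)
    (hfin : Module.Finite F ↥U)
    (Us : Finset (MvPolynomial ι F)) (hUs : ↑Us = (U : Set (MvPolynomial ι F)))
    (ℓ : ℕ) (hl : 0 < ℓ)
    (h : ∑ u ∈ Us, u ^ ℓ ≠ 0) :
    (Fintype.card F - 1) ∣ ℓ ∧
      (Fintype.card F - 1) * Module.finrank F ↥U ≤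
        (Nat.digits (Fintype.card F) ℓ).sum := by
  classical
  haveI := hfin
  haveI : Finite ↥U := Module.finite_of_finite F
  haveI : Fintype ↥U := Fintype.ofFinite _
  obtain ⟨f, hp, hcard⟩ := FiniteField.card F (ringChar F)
  set p := ringChar F with hpdef
  set n := Module.finrank F ↥U with hn
  set b : Module.Basis (Fin n) F ↥U := Module.finBasis F ↥U with hb
  set v : Fin n → MvPolynomial ι F := fun i => (b i : MvPolynomial ι F) with hv
  -- Step 1: sum over the finset = sum over the subtype
  have h1 : ∑ u ∈ Us, u ^ ℓ = ∑ u : ↥U, (u : MvPolynomial ι F) ^ ℓ := by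
    refine Finset.sum_subtype Us (fun x => ?_) (fun u => u ^ ℓ)
    rw [← Finset.mem_coe, hUs, SetLike.mem_coe]
  -- Step 2: reindex via the basis
  have h2 : ∑ u : ↥U, (u : MvPolynomial ι F) ^ ℓ
      = ∑ c : Fin n → F, (∑ i, c i • v i) ^ ℓ := by
    rw [← Equiv.sum_comp b.equivFun.toEquiv.symm
      (fun u : ↥U => (u : MvPolynomial ι F) ^ ℓ)]
    refine Finset.sum_congr rfl fun c _ => ?_
    congr 1
    show ((b.equivFun.symm c : ↥U) : MvPolynomial ι F) = _
    rw [Module.Basis.equivFun_symm_apply]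
    push_cast [Submodule.coe_sum]
    rfl
  -- Step 3: multinomial expansion
  have h3 : ∀ c : Fin n → F, (∑ i, c i • v i) ^ ℓ
      = ∑ k ∈ Finset.piAntidiag Finset.univ ℓ,
          (C ((Nat.multinomial Finset.univ k : F) * ∏ i, c i ^ k i) * ∏ i, v i ^ k i) := by
    intro c
    rw [Finset.sum_pow_eq_sum_piAntidiag]
    refine Finset.sum_congr rfl fun k _ => ?_
    simp only [smul_pow, smul_eq_C_mul, mul_pow, Finset.prod_mul_distrib, map_mul, map_prod,
      map_pow, map_natCast]
    ring
  -- Step 4: swap sums and factor the inner sum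
  have h4 : ∑ c : Fin n → F, (∑ i, c i • v i) ^ ℓ
      = ∑ k ∈ Finset.piAntidiag Finset.univ ℓ,
          C ((Nat.multinomial Finset.univ k : F) * ∏ i, ∑ t : F, t ^ k i)
            * ∏ i, v i ^ k i := by
    simp_rw [h3]
    rw [Finset.sum_comm]
    refine Finset.sum_congr rfl fun k _ => ?_
    rw [← Finset.sum_mul, ← map_sum, ← Finset.mul_sum,
      Fintype.prod_sum fun (i : Fin n) (t : F) => t ^ k i]
  rw [h1, h2, h4] at h
  obtain ⟨k, hk, hne⟩ := Finset.exists_ne_zero_of_sum_ne_zero h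
  have hkmem := Finset.mem_piAntidiag.1 hk
  have hscal : (Nat.multinomial Finset.univ k : F) * ∏ i, ∑ t : F, t ^ k i ≠ 0 := by
    intro h0
    rw [h0, map_zero, zero_mul] at hne
    exact hne rfl
  have hmulF : (Nat.multinomial Finset.univ k : F) ≠ 0 := left_ne_zero_of_mul hscal
  have hprodF : ∀ i : Fin n, (∑ t : F, t ^ k i) ≠ 0 := by
    intro i
    have := right_ne_zero_of_mul hscal
    exact fun h0 => this (Finset.prod_eq_zero (Finset.mem_univ i) h0)
  have hnotp : ¬ p ∣ Nat.multinomial Finset.univ k := by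
    intro hdvd
    exact hmulF ((CharP.cast_eq_zero_iff F p _).2 hdvd)
  have hki : ∀ i : Fin n, 0 < k i ∧ (Fintype.card F - 1) ∣ k i :=
    fun i => ne_zero_sum_pow (hprodF i)
  have hq2 : 2 ≤ Fintype.card F := Fintype.one_lt_card
  have hsum : ∑ i, k i = ℓ := hkmem.1
  constructor
  · rw [← hsum]
    exact Finset.dvd_sum fun i _ => (hki i).2
  · have hdig := sum_digits_multinomial hp f.2 hcard Finset.univ k hnotp
    rw [hsum] at hdig
    rw [hdig]
    calc (Fintype.card F - 1) * n = ∑ _i : Fin n, (Fintype.card F - 1) := by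
          simp [mul_comm]
      _ ≤ ∑ i, (Nat.digits (Fintype.card F) (k i)).sum :=
          Finset.sum_le_sum fun i _ =>
            sub_one_le_sum_digits hq2 (hki i).1 (hki i).2
end

section
/- Let q be a prime power, c ≥ 1 and 1 ≤ a ≤ c, and b ≥ 0 with a + 1 ≤ c + 2. Then the composite δ_{a+1;b} ∘ δ_{a;b} : 𝔽_q(x_1, …, x_c) → 𝔽_q(x_1, …, x_{c+2}) of the two delta operators is the zero map. -/
open MvPolynomial

noncomputable section

set_option maxHeartbeats 1000000
set_option synthInstance.maxHeartbeats 400000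

/-- The field of rational functions in `c` variables over `F`. -/
abbrev RatF (F : Type*) [Field F] (c : ℕ) : Type _ :=
  FractionRing (MvPolynomial (Fin c) F)

/-- The image of a polynomial in the rational function field. -/
def toRat (F : Type*) [Field F] {c : ℕ} (f : MvPolynomial (Fin c) F) : RatF F c :=
  algebraMap (MvPolynomial (Fin c) F) (RatF F c) f

/-- `f ↦ f(x_1, …, x̂_j, …, x_{c+1})`: the embedding of rational functions in
`c` variables into rational functions in `c+1` variables whose argument list
skips the variable `x_j`. -/
def omitVar (F : Type*) [Field F] {c : ℕ} (j : Fin (c + 1)) :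
    RatF F c →+* RatF F (c + 1) :=
  IsFractionRing.lift
    (g := (algebraMap (MvPolynomial (Fin (c + 1)) F) (RatF F (c + 1))).comp
      (rename j.succAbove).toRingHom)
    ((IsFractionRing.injective (MvPolynomial (Fin (c + 1)) F) (RatF F (c + 1))).comp
      (rename_injective _ (Fin.succAbove_right_injective)))

/-- The image of the variable `x_i` in the rational function field. -/
def xR (F : Type*) [Field F] {c : ℕ} (i : Fin c) : RatF F c := toRat F (X i)

/-- The delta operator `δ_{a;b} : F_q(x_1, …, x_c) → F_q(x_1, …, x_{c+1})`,
given by the quotient of two determinants: the denominator is the Moore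
determinant `L(x_1, …, x_a) = det(x_j^{q^{i-1}})`, and the numerator is
obtained from it by replacing the last row by
`(x_j^{q^b} · f(x_1, …, x̂_j, …, x_{c+1}))_j`. -/
def delta (F : Type*) [Field F] [Fintype F] (a b c : ℕ) (ha : a ≤ c + 1)
    (f : RatF F c) : RatF F (c + 1) :=
  Matrix.det (Matrix.of fun i j : Fin a =>
      if (i : ℕ) + 1 < a then xR F (Fin.castLE ha j) ^ Fintype.card F ^ (i : ℕ)
      else xR F (Fin.castLE ha j) ^ Fintype.card F ^ b * omitVar F (Fin.castLE ha j) f) /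
    Matrix.det (Matrix.of fun i j : Fin a =>
      xR F (Fin.castLE ha j) ^ Fintype.card F ^ (i : ℕ))

/-- A rational function "is a polynomial" if it lies in the image of the
polynomial ring. -/
def IsPolyFn (F : Type*) [Field F] {c : ℕ} (f : RatF F c) : Prop :=
  f ∈ Set.range (algebraMap (MvPolynomial (Fin c) F) (RatF F c))


/-! ### auxiliary machinery -/

/-- Moore-type matrix in the rational function field. -/
def mooreM (F : Type*) [Field F] [Fintype F] {m n : ℕ} (v : Fin n → Fin m) :
    Matrix (Fin n) (Fin n) (RatF F m) :=
  Matrix.of fun i j => xR F (v j) ^ Fintype.card F ^ (i : ℕ)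

/-- The numerator-type matrix. -/
def numM (F : Type*) [Field F] [Fintype F] {m n : ℕ} (b : ℕ) (v : Fin n → Fin m)
    (g : Fin n → RatF F m) : Matrix (Fin n) (Fin n) (RatF F m) :=
  Matrix.of fun i j => if (i : ℕ) + 1 < n then xR F (v j) ^ Fintype.card F ^ (i : ℕ)
    else xR F (v j) ^ Fintype.card F ^ b * g j

lemma delta_eq (F : Type*) [Field F] [Fintype F] (a b c : ℕ) (ha : a ≤ c + 1)
    (f : RatF F c) :
    delta F a b c ha f
      = Matrix.det (numM F b (Fin.castLE ha) (fun j => omitVar F (Fin.castLE ha j) f))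
        / Matrix.det (mooreM F (Fin.castLE ha)) := rfl

lemma val_succAbove {n : ℕ} (j : Fin (n+1)) (i : Fin n) :
    ((j.succAbove i : Fin (n+1)) : ℕ) = if (i:ℕ) < (j:ℕ) then (i:ℕ) else (i:ℕ)+1 := by
  unfold Fin.succAbove
  split_ifs with h h' h' <;> simp_all [Fin.lt_def]

lemma sum_single_apply_inj {n m : ℕ} (v : Fin n → Fin m) (hv : Function.Injective v)
    (d : Fin n → ℕ) (t : Fin n) :
    (∑ i : Fin n, Finsupp.single (v i) (d i)) (v t) = d t := by
  rw [Finsupp.finset_sum_apply, Finset.sum_eq_single t]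
  · simp
  · intro i _ hne
    rw [Finsupp.single_apply, if_neg (fun h => hne (hv h))]
  · simp

lemma moore_poly_ne_zero (F : Type*) [Field F] [Fintype F] {n m : ℕ} (v : Fin n → Fin m)
    (hv : Function.Injective v) :
    Matrix.det (Matrix.of fun i j : Fin n =>
      (X (v j) : MvPolynomial (Fin m) F) ^ Fintype.card F ^ (i:ℕ)) ≠ 0 := by
  have hq : 2 ≤ Fintype.card F := Fintype.one_lt_card
  set q := Fintype.card F with hqdef
  intro h0
  have hcoeff : coeff (∑ i : Fin n, Finsupp.single (v i) (q ^ (i:ℕ)))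
      (Matrix.det (Matrix.of fun i j : Fin n =>
        (X (v j) : MvPolynomial (Fin m) F) ^ q ^ (i:ℕ))) = 1 := by
    rw [Matrix.det_apply]
    have hmon : ∀ σ : Equiv.Perm (Fin n),
        (∏ i : Fin n, (Matrix.of fun i j : Fin n =>
          (X (v j) : MvPolynomial (Fin m) F) ^ q ^ (i:ℕ)) (σ i) i)
        = monomial (∑ i : Fin n, Finsupp.single (v i) (q ^ ((σ i : Fin n):ℕ))) (1 : F) := by
      intro σ
      simp only [Matrix.of_apply, X_pow_eq_monomial]
      rw [monomial_sum_index]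
      simp
    rw [coeff_sum]
    have key : ∀ σ : Equiv.Perm (Fin n),
        coeff (∑ i : Fin n, Finsupp.single (v i) (q ^ (i:ℕ)))
          (Equiv.Perm.sign σ • ∏ i : Fin n, (Matrix.of fun i j : Fin n =>
            (X (v j) : MvPolynomial (Fin m) F) ^ q ^ (i:ℕ)) (σ i) i)
        = if σ = 1 then 1 else 0 := by
      intro σ
      rw [hmon σ, MvPolynomial.coeff_smul, coeff_monomial]
      by_cases hσ : σ = 1
      · subst hσ; simp
      · rw [if_neg hσ, if_neg, smul_zero]
        intro heq
        apply hσ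
        ext t
        have h2 := congrArg (fun g => g (v t)) heq
        rw [sum_single_apply_inj v hv _ t, sum_single_apply_inj v hv _ t] at h2
        simpa using Nat.pow_right_injective hq h2
    rw [Finset.sum_congr rfl (fun σ _ => key σ)]
    simp
  rw [h0] at hcoeff
  simp at hcoeff

lemma mooreM_det_ne_zero (F : Type*) [Field F] [Fintype F] {n m : ℕ} {v : Fin n → Fin m}
    (hv : Function.Injective v) : Matrix.det (mooreM F v) ≠ 0 := by
  have : mooreM F v
      = (algebraMap (MvPolynomial (Fin m) F) (RatF F m)).mapMatrix
        (Matrix.of fun i j : Fin n =>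
          (X (v j) : MvPolynomial (Fin m) F) ^ Fintype.card F ^ (i:ℕ)) := by
    ext i j
    simp [mooreM, xR, toRat, map_pow]
  rw [this, ← RingHom.map_det]
  intro h0
  exact moore_poly_ne_zero F v hv
    ((map_eq_zero_iff _ (IsFractionRing.injective _ _)).mp h0)

lemma omitVar_toRat (F : Type*) [Field F] {c : ℕ} (j : Fin (c + 1))
    (p : MvPolynomial (Fin c) F) :
    omitVar F j (toRat F p) = toRat F (rename j.succAbove p) :=
  IsFractionRing.lift_algebraMap _ _

lemma omitVar_xR (F : Type*) [Field F] {c : ℕ} (j : Fin (c + 1)) (i : Fin c) :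
    omitVar F j (xR F i) = xR F (j.succAbove i) := by
  rw [xR, omitVar_toRat, rename_X]; rfl

lemma omitVar_omitVar (F : Type*) [Field F] {c : ℕ} (j j' : Fin (c + 2)) (k k' : Fin (c + 1))
    (h : j.succAbove ∘ k.succAbove = j'.succAbove ∘ k'.succAbove) (x : RatF F c) :
    omitVar F j (omitVar F k x) = omitVar F j' (omitVar F k' x) := by
  have h2 : (omitVar F j).comp (omitVar F k) = (omitVar F j').comp (omitVar F k') := by
    apply IsLocalization.ringHom_ext (nonZeroDivisors (MvPolynomial (Fin c) F))
    refine RingHom.ext fun p => ?_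
    simp only [RingHom.comp_apply]
    show omitVar F j (omitVar F k (toRat F p)) = omitVar F j' (omitVar F k' (toRat F p))
    rw [omitVar_toRat, omitVar_toRat, omitVar_toRat, omitVar_toRat,
      rename_rename, rename_rename, h]
  exact DFunLike.congr_fun h2 x

/-- Laplace expansion of the numerator matrix along its last row. -/
lemma det_numM (F : Type*) [Field F] [Fintype F] {m n : ℕ} (b : ℕ)
    (v : Fin (n+1) → Fin m) (g : Fin (n+1) → RatF F m) :
    (numM F b v g).det = ∑ j : Fin (n+1),
      (-1)^(n + (j:ℕ)) * (xR F (v j) ^ Fintype.card F ^ b * g j)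
        * (mooreM F (v ∘ j.succAbove)).det := by
  rw [Matrix.det_succ_row _ (Fin.last n)]
  refine Finset.sum_congr rfl fun j _ => ?_
  have h1 : numM F b v g (Fin.last n) j = xR F (v j) ^ Fintype.card F ^ b * g j := by
    simp [numM]
  have h2 : (numM F b v g).submatrix (Fin.last n).succAbove j.succAbove
      = mooreM F (v ∘ j.succAbove) := by
    ext i k
    show numM F b v g ((Fin.last n).succAbove i) (j.succAbove k) = _
    rw [Fin.succAbove_last]
    simp only [numM, mooreM, Matrix.of_apply, Fin.coe_castSucc, Function.comp_apply]
    rw [if_pos (by have := i.is_lt; omega : (i:ℕ)+1 < n+1)]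
  rw [h1, h2, Fin.val_last]

lemma omitVar_delta (F : Type*) [Field F] [Fintype F] (a b c : ℕ) (ha : a ≤ c + 1)
    (f : RatF F c) (j : Fin (c + 2)) :
    omitVar F j (delta F a b c ha f)
      = Matrix.det (numM F b (j.succAbove ∘ Fin.castLE ha)
          (fun k => omitVar F j (omitVar F (Fin.castLE ha k) f)))
        / Matrix.det (mooreM F (j.succAbove ∘ Fin.castLE ha)) := by
  rw [delta_eq, map_div₀, RingHom.map_det, RingHom.map_det]
  congr 1
  · refine congrArg Matrix.det ?_
    ext i k
    show omitVar F j (numM F b (Fin.castLE ha) _ i k) = numM F b (j.succAbove ∘ Fin.castLE ha) _ i k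
    simp [numM, apply_ite (omitVar F j), map_mul, map_pow, omitVar_xR]
  · refine congrArg Matrix.det ?_
    ext i k
    show omitVar F j (mooreM F (Fin.castLE ha) i k) = mooreM F (j.succAbove ∘ Fin.castLE ha) i k
    simp [mooreM, map_pow, omitVar_xR]

lemma neg_one_pow_odd_sum {K : Type*} [Ring K] {m n : ℕ} (h : Odd (m + n)) :
    ((-1:K))^m = -(-1)^n := by
  rcases Nat.even_or_odd m with hm | hm <;> rcases Nat.even_or_odd n with hn | hn
  · exact absurd (hm.add hn) (Nat.not_even_iff_odd.mpr h)
  · rw [hm.neg_one_pow, hn.neg_one_pow, neg_neg]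
  · rw [hm.neg_one_pow, hn.neg_one_pow]
  · exact absurd (hm.add_odd hn) (Nat.not_even_iff_odd.mpr h)

lemma helper_div {K : Type*} [Field K] (A X N D : K) (hD : D ≠ 0) :
    A * (X * (N / D)) * D = A * X * N := by
  field_simp

/-- The term appearing in the double Laplace expansion. -/
def Tterm (F : Type*) [Field F] [Fintype F] (a' b c : ℕ) (h1 : a'+1+1 ≤ c+1+1)
    (h2 : a'+1 ≤ c+1) (f : RatF F c) (p : Fin (a'+1+1) × Fin (a'+1)) : RatF F (c+1+1) :=
  ((-1 : RatF F (c+1+1)) ^ (a'+1+(p.1:ℕ)) * (-1) ^ (a'+(p.2:ℕ))) *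
  (xR F (Fin.castLE h1 p.1) ^ Fintype.card F ^ b *
    xR F ((Fin.castLE h1 p.1).succAbove (Fin.castLE h2 p.2)) ^ Fintype.card F ^ b) *
  omitVar F (Fin.castLE h1 p.1) (omitVar F (Fin.castLE h2 p.2) f) *
  (mooreM F (((Fin.castLE h1 p.1).succAbove ∘ Fin.castLE h2) ∘ p.2.succAbove)).det

/-- The fixed-point-free involution pairing up cancelling terms. -/
def iot (a' : ℕ) (p : Fin (a'+1+1) × Fin (a'+1)) : Fin (a'+1+1) × Fin (a'+1) :=
  (p.1.succAbove p.2,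
   ⟨if (p.2:ℕ) < (p.1:ℕ) then (p.1:ℕ) - 1 else (p.1:ℕ), by
      have := p.1.is_lt; have := p.2.is_lt; split_ifs <;> omega⟩)

lemma iot_ne (a' : ℕ) (p : Fin (a'+1+1) × Fin (a'+1)) : iot a' p ≠ p :=
  fun h => Fin.succAbove_ne p.1 p.2 (congrArg Prod.fst h)

lemma iot_invol (a' : ℕ) (p : Fin (a'+1+1) × Fin (a'+1)) : iot a' (iot a' p) = p := by
  obtain ⟨j, k⟩ := p
  have hj := j.is_lt; have hk := k.is_lt
  refine Prod.ext ?_ ?_ <;> apply Fin.ext <;>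
    simp only [iot, val_succAbove, Fin.val_mk] <;> split_ifs <;> omega

lemma Tterm_pair (F : Type*) [Field F] [Fintype F] (a' b c : ℕ) (h1 : a'+1+1 ≤ c+1+1)
    (h2 : a'+1 ≤ c+1) (f : RatF F c) (p : Fin (a'+1+1) × Fin (a'+1)) :
    Tterm F a' b c h1 h2 f p + Tterm F a' b c h1 h2 f (iot a' p) = 0 := by
  obtain ⟨j, k⟩ := p
  have hj := j.is_lt; have hk := k.is_lt
  set k' : Fin (a'+1) := ⟨if (k:ℕ) < (j:ℕ) then (j:ℕ) - 1 else (j:ℕ), by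
      split_ifs <;> omega⟩ with hk'def
  have hk'v : (k':ℕ) = if (k:ℕ) < (j:ℕ) then (j:ℕ) - 1 else (j:ℕ) := rfl
  have hiot : iot a' (j, k) = (j.succAbove k, k') := rfl
  have f1 : (Fin.castLE h1 (j.succAbove k)) = (Fin.castLE h1 j).succAbove (Fin.castLE h2 k) := by
    apply Fin.ext
    simp only [Fin.coe_castLE, val_succAbove]
    all_goals split_ifs <;> omega
  have f2 : (Fin.castLE h1 (j.succAbove k)).succAbove (Fin.castLE h2 k') = Fin.castLE h1 j := by
    apply Fin.ext
    simp only [Fin.coe_castLE, val_succAbove, hk'v]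
    all_goals split_ifs <;> omega
  have f3 : (Fin.castLE h1 (j.succAbove k)).succAbove ∘ (Fin.castLE h2 k').succAbove
      = (Fin.castLE h1 j).succAbove ∘ (Fin.castLE h2 k).succAbove := by
    funext i
    have hi := i.is_lt
    apply Fin.ext
    simp only [Function.comp_apply, val_succAbove, Fin.coe_castLE, hk'v]
    all_goals split_ifs <;> omega
  have f3' := omitVar_omitVar F (Fin.castLE h1 (j.succAbove k)) (Fin.castLE h1 j)
    (Fin.castLE h2 k') (Fin.castLE h2 k) f3 f
  have f4 : ((Fin.castLE h1 (j.succAbove k)).succAbove ∘ Fin.castLE h2) ∘ k'.succAbove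
      = ((Fin.castLE h1 j).succAbove ∘ Fin.castLE h2) ∘ k.succAbove := by
    funext l
    have hl := l.is_lt
    apply Fin.ext
    simp only [Function.comp_apply, val_succAbove, Fin.coe_castLE, hk'v]
    all_goals split_ifs <;> omega
  have f5 : ((-1 : RatF F (c+1+1)) ^ (a'+1+((j.succAbove k : Fin (a'+1+1)):ℕ))
        * (-1) ^ (a'+(k':ℕ)))
      = -((-1 : RatF F (c+1+1)) ^ (a'+1+(j:ℕ)) * (-1) ^ (a'+(k:ℕ))) := by
    rw [← pow_add, ← pow_add]
    refine neg_one_pow_odd_sum ?_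
    rw [Nat.odd_iff]
    simp only [val_succAbove, hk'v]
    all_goals split_ifs <;> omega
  rw [hiot]
  simp only [Tterm]
  rw [f3', f4, f2, f5, f1]
  ring

/-- Lemma: the composite of two consecutive delta operators vanishes:
`δ_{a+1;b} ∘ δ_{a;b} = 0`. -/
theorem stmt_11 (F : Type*) [Field F] [Fintype F] (a b c : ℕ)
    (hc : 1 ≤ c) (ha1 : 1 ≤ a) (hac : a ≤ c) (f : RatF F c) :
    delta F (a + 1) b (c + 1) (by omega) (delta F a b c (by omega) f) = 0 := by
  obtain ⟨a', rfl⟩ : ∃ a', a = a' + 1 := ⟨a - 1, by omega⟩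
  suffices H : ∀ (h1 : a' + 1 + 1 ≤ c + 1 + 1) (h2 : a' + 1 ≤ c + 1),
      delta F (a'+1+1) b (c+1) h1 (delta F (a'+1) b c h2 f) = 0 from H _ _
  intro h1 h2
  rw [delta_eq, div_eq_zero_iff]
  left
  rw [det_numM]
  have hD : ∀ j : Fin (a'+1+1),
      (mooreM F ((Fin.castLE h1 j).succAbove ∘ Fin.castLE h2)).det ≠ 0 := fun j =>
    mooreM_det_ne_zero F (Fin.succAbove_right_injective.comp (Fin.castLE_injective _))
  have hvv : ∀ j : Fin (a'+1+1),
      Fin.castLE h1 ∘ j.succAbove = (Fin.castLE h1 j).succAbove ∘ Fin.castLE h2 := by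
    intro j
    funext k
    have hk := k.is_lt
    apply Fin.ext
    simp only [Function.comp_apply, Fin.coe_castLE, val_succAbove]
    all_goals split_ifs <;> omega
  have hterm : ∀ j : Fin (a'+1+1),
      (-1 : RatF F (c+1+1)) ^ (a'+1+(j:ℕ))
        * (xR F (Fin.castLE h1 j) ^ Fintype.card F ^ b
          * omitVar F (Fin.castLE h1 j) (delta F (a'+1) b c h2 f))
        * (mooreM F (Fin.castLE h1 ∘ j.succAbove)).det
      = ∑ k : Fin (a'+1), Tterm F a' b c h1 h2 f (j, k) := by
    intro j
    rw [omitVar_delta F (a'+1) b c h2 f (Fin.castLE h1 j), hvv j,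
      helper_div _ _ _ _ (hD j), det_numM, Finset.mul_sum]
    refine Finset.sum_congr rfl fun k _ => ?_
    simp only [Tterm, Function.comp_apply]
    ring
  rw [Finset.sum_congr rfl fun j _ => hterm j, ← Fintype.sum_prod_type]
  exact Finset.sum_ninvolution (iot a') (fun p => Tterm_pair F a' b c h1 h2 f p)
    (fun p _ => iot_ne a' p) (fun p => Finset.mem_univ _) (iot_invol a')


end
end
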